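/- arXiv:1803.07642 — 12 statements merged into one kernel-verified Lean document; each statement's English description precedes it below -/
import Mathlib

section
/- Trilateration lemma: Let v₀, …, v_m be affinely independent points of EuclideanSpace ℝ (Fin m) spanning the m-simplex σ (their convex hull), with longest edge length L and thickness t. Let 0 ≤ ξ ≤ 1 and let F : σ → EuclideanSpace ℝ (Fin m) be a ξ-distortion map on σ (i.e. |‖F x − F y‖ − ‖x − y‖| ≤ ξ·‖x − y‖ for all x, y ∈ σ) that fixes every vertex: F vᵢ = vᵢ for all i. Then for every x ∈ σ, ‖x − F x‖ ≤ 3ξL/t. -/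
/-! The defect `e = x - F x` is controlled through its inner products with the edge vectors
`v i - v 0`: since `F` fixes the vertices and nearly preserves the distances to them, polarization
gives `|⟪e, v i - v 0⟫| ≤ 3ξL²`. The dual basis of the edge vectors consists of the altitude vectors
of the simplex rescaled to length `1 / altitude ≤ 1 / a`, so expanding `e` in it gives
`‖e‖ ≤ m · 3ξL² / a = 3ξL / t`. -/

open RealInnerProductSpace Metric Module Set

theorem abs_sq_sub_sq_le_of_abs_sub_le {d d' ξ L : ℝ} (hd : 0 ≤ d) (hdL : d ≤ L) (hξ0 : 0 ≤ ξ)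
    (hξ1 : ξ ≤ 1) (h : |d' - d| ≤ ξ * d) : |d' ^ 2 - d ^ 2| ≤ 3 * ξ * L ^ 2 := by
  have hsum : |d' + d| ≤ 3 * L :=
    calc |d' + d| = |(d' - d) + 2 * d| := by ring_nf
      _ ≤ |d' - d| + 2 * d := by
        simpa [abs_of_nonneg (by positivity : (0 : ℝ) ≤ 2 * d)] using abs_add_le (d' - d) (2 * d)
      _ ≤ 3 * L := by nlinarith
  calc |d' ^ 2 - d ^ 2| = |d' - d| * |d' + d| := by rw [← abs_mul]; ring_nf
    _ ≤ (ξ * L) * (3 * L) :=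
      mul_le_mul (h.trans (by gcongr)) hsum (abs_nonneg _) (mul_nonneg hξ0 (hd.trans hdL))
    _ = 3 * ξ * L ^ 2 := by ring

section NormedSpace

variable {E ι : Type*} [NormedAddCommGroup E] [NormedSpace ℝ E]

theorem dist_le_of_mem_convexHull_range {v : ι → E} {L : ℝ} (hL : ∀ i k, dist (v i) (v k) ≤ L)
    {y : E} (hy : y ∈ convexHull ℝ (range v)) (j : ι) : dist y (v j) ≤ L := by
  obtain ⟨_, ⟨k, rfl⟩, hk⟩ := convexHull_exists_dist_ge hy (v j)
  exact hk.trans (hL k j)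

theorem AffineIndependent.infDist_affineSpan_compl_pos [FiniteDimensional ℝ E] [Nontrivial ι]
    {v : ι → E} (hv : AffineIndependent ℝ v) (i : ι) :
    0 < infDist (v i) (affineSpan ℝ (v '' {i}ᶜ)) := by
  obtain ⟨j, hj⟩ := exists_ne i
  refine ((AffineSubspace.closed_of_finiteDimensional _).notMem_iff_infDist_pos
    ⟨v j, subset_affineSpan ℝ _ (mem_image_of_mem v hj)⟩).1 ?_
  simpa [compl_eq_univ_sdiff] using hv.notMem_affineSpan_sdiff i univ

end NormedSpace

section InnerProductSpace

variable {E : Type*} [NormedAddCommGroup E] [InnerProductSpace ℝ E]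

theorem abs_inner_sub_sub_le_of_abs_norm_sq_sub_le {x y p q : E} {C : ℝ}
    (hp : |‖y - p‖ ^ 2 - ‖x - p‖ ^ 2| ≤ C) (hq : |‖y - q‖ ^ 2 - ‖x - q‖ ^ 2| ≤ C) :
    |⟪x - y, p - q⟫| ≤ C := by
  have polarization :
      2 * ⟪x - y, p - q⟫ = (‖y - p‖ ^ 2 - ‖x - p‖ ^ 2) - (‖y - q‖ ^ 2 - ‖x - q‖ ^ 2) := by
    simp only [norm_sub_sq_real, inner_sub_left, inner_sub_right]
    ring
  rw [abs_le] at hp hq ⊢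
  constructor <;> linarith

theorem AffineSubspace.exists_inner_eq_one_and_norm_le_inv_infDist (S : AffineSubspace ℝ E)
    [S.direction.HasOrthogonalProjection] {p q : E} (hq : q ∈ S) (hp : 0 < infDist p S) :
    ∃ u : E, ⟪p - q, u⟫ = 1 ∧ (∀ z ∈ S.direction, ⟪z, u⟫ = 0) ∧ ‖u‖ ≤ (infDist p S)⁻¹ := by
  set K := S.direction
  set π := K.starProjection (p - q)
  set r := p - q - π
  have hπ : π ∈ K := K.starProjection_apply_mem _
  have hr : r ∈ Kᗮ := K.sub_starProjection_mem_orthogonal _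
  have hdist : infDist p S ≤ ‖r‖ := by
    have := infDist_le_dist_of_mem (x := p) (AffineSubspace.vadd_mem_of_mem_direction hπ hq)
    rwa [dist_eq_norm, vadd_eq_add, ← sub_sub, sub_right_comm] at this
  have hr0 : 0 < ‖r‖ := hp.trans_le hdist
  refine ⟨(‖r‖ ^ 2)⁻¹ • r, ?_, fun z hz => ?_, ?_⟩
  · have hπr : ⟪π, r⟫ = 0 := Submodule.inner_right_of_mem_orthogonal hπ hr
    have hsplit : p - q = π + r := by simp [r]
    rw [real_inner_smul_right, hsplit, inner_add_left, hπr, real_inner_self_eq_norm_sq, zero_add,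
      inv_mul_cancel₀ (by positivity)]
  · rw [real_inner_smul_right, Submodule.inner_right_of_mem_orthogonal hz hr, mul_zero]
  · calc ‖(‖r‖ ^ 2)⁻¹ • r‖ = ‖r‖⁻¹ := by
          rw [norm_smul, norm_inv, norm_pow, norm_norm]; field_simp
      _ ≤ (infDist p S)⁻¹ := inv_anti₀ hp hdist

theorem Module.Basis.eq_sum_inner_smul_of_biorthogonal {ι : Type*} [Fintype ι] (b : Basis ι ℝ E)
    {u : ι → E} (hself : ∀ i, ⟪b i, u i⟫ = 1) (hother : ∀ i j, i ≠ j → ⟪b i, u j⟫ = 0) (e : E) :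
    e = ∑ j, ⟪e, b j⟫ • u j := by
  refine InnerProductSpace.ext_inner_left_basis b fun i => ?_
  rw [inner_sum, Finset.sum_eq_single i (fun j _ hji => by
    rw [real_inner_smul_right, hother i j hji.symm, mul_zero]) (by simp),
    real_inner_smul_right, hself, mul_one, real_inner_comm]

theorem AffineIndependent.norm_le_of_abs_inner_vsub_le [FiniteDimensional ℝ E] {ι : Type*}
    [Fintype ι] {v : ι → E} (hv : AffineIndependent ℝ v) (hcard : Fintype.card ι = finrank ℝ E + 1)
    {a C : ℝ} (ha : 0 < a) (halt : ∀ i, a ≤ infDist (v i) (affineSpan ℝ (v '' {i}ᶜ))) (i₀ : ι)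
    {e : E} (he : ∀ i, |⟪e, v i - v i₀⟫| ≤ C) : ‖e‖ ≤ finrank ℝ E * C / a := by
  classical
  have hli : LinearIndependent ℝ fun i : {i // i ≠ i₀} => v i - v i₀ :=
    (affineIndependent_iff_linearIndependent_vsub ℝ v i₀).1 hv
  have hcard' : Fintype.card {i // i ≠ i₀} = finrank ℝ E := by
    simp [Fintype.card_subtype_compl, hcard]
  set b := basisOfLinearIndependentOfCardEqFinrank' _ hli hcard'
  have hdual : ∀ i : {i // i ≠ i₀}, ∃ u : E,
      ⟪b i, u⟫ = 1 ∧ (∀ j, j ≠ i → ⟪b j, u⟫ = 0) ∧ ‖u‖ ≤ a⁻¹ := by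
    intro i
    have hi₀ : v i₀ ∈ affineSpan ℝ (v '' {i.1}ᶜ) :=
      subset_affineSpan ℝ _ (mem_image_of_mem v (Ne.symm i.2))
    obtain ⟨u, hu1, hu0, hun⟩ :=
      (affineSpan ℝ (v '' {i.1}ᶜ)).exists_inner_eq_one_and_norm_le_inv_infDist hi₀
        (ha.trans_le (halt i))
    refine ⟨u, by simpa [b] using hu1, fun j hji => ?_, hun.trans (inv_anti₀ ha (halt i))⟩
    have hj : v j ∈ affineSpan ℝ (v '' {i.1}ᶜ) :=
      subset_affineSpan ℝ _ (mem_image_of_mem v fun h => hji (Subtype.ext h))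
    simpa [b] using hu0 _ (AffineSubspace.vsub_mem_direction hj hi₀)
  choose u hu1 hu0 hun using hdual
  have hC : 0 ≤ C := (abs_nonneg _).trans (he i₀)
  calc ‖e‖ = ‖∑ i, ⟪e, b i⟫ • u i‖ := by
        rw [← b.eq_sum_inner_smul_of_biorthogonal hu1 fun i j hij => hu0 j i hij]
    _ ≤ ∑ _i : {i // i ≠ i₀}, C * a⁻¹ := norm_sum_le_of_le _ fun i _ => by
        rw [norm_smul, Real.norm_eq_abs]
        exact mul_le_mul (by simpa [b] using he i) (hun i) (norm_nonneg _) hC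
    _ = finrank ℝ E * C / a := by simp [hcard', div_eq_mul_inv, mul_assoc]

end InnerProductSpace

/-- **Trilateration lemma.** If `F` is a `ξ`-distortion map on an `m`-simplex
`σ ⊆ ℝᵐ` with longest edge length `L` and thickness `t`, fixing all vertices,
then `‖x - F x‖ ≤ 3ξL/t` for all `x ∈ σ`. -/
theorem trilateration {m : ℕ} (hm : 1 ≤ m)
    (v : Fin (m + 1) → EuclideanSpace ℝ (Fin m))
    (hv : AffineIndependent ℝ v)
    (σ : Set (EuclideanSpace ℝ (Fin m)))
    (hσ : σ = convexHull ℝ (Set.range v))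
    (L a t : ℝ)
    (hL : IsGreatest {d : ℝ | ∃ i k : Fin (m + 1), i ≠ k ∧ d = ‖v i - v k‖} L)
    (ha : IsLeast {d : ℝ | ∃ i : Fin (m + 1),
      d = Metric.infDist (v i) (affineSpan ℝ (v '' {i}ᶜ) : Set (EuclideanSpace ℝ (Fin m)))} a)
    (ht : t = a / (m * L))
    (ξ : ℝ) (hξ0 : 0 ≤ ξ) (hξ1 : ξ ≤ 1)
    (F : EuclideanSpace ℝ (Fin m) → EuclideanSpace ℝ (Fin m))
    (hdistort : ∀ x ∈ σ, ∀ y ∈ σ, |‖F x - F y‖ - ‖x - y‖| ≤ ξ * ‖x - y‖)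
    (hfix : ∀ i, F (v i) = v i) :
    ∀ x ∈ σ, ‖x - F x‖ ≤ 3 * ξ * L / t := by
  intro x hx
  have hL0 : 0 < L := by
    obtain ⟨i, k, hik, rfl⟩ := hL.1
    exact norm_pos_iff.2 (sub_ne_zero.2 (hv.injective.ne hik))
  have hedge : ∀ i k, dist (v i) (v k) ≤ L := fun i k => by
    rcases eq_or_ne i k with rfl | hik
    · simpa using hL0.le
    · simpa [dist_eq_norm] using hL.2 ⟨i, k, hik, rfl⟩
  have hvσ : ∀ j, v j ∈ σ := fun j => hσ ▸ subset_convexHull ℝ _ (mem_range_self j)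
  have hsq : ∀ j, |‖F x - v j‖ ^ 2 - ‖x - v j‖ ^ 2| ≤ 3 * ξ * L ^ 2 := fun j =>
    abs_sq_sub_sq_le_of_abs_sub_le (norm_nonneg _)
      (by simpa [dist_eq_norm] using dist_le_of_mem_convexHull_range hedge (hσ ▸ hx) j) hξ0 hξ1
      (by simpa [hfix j] using hdistort x hx (v j) (hvσ j))
  have hinner : ∀ j, |⟪x - F x, v j - v 0⟫| ≤ 3 * ξ * L ^ 2 := fun j =>
    abs_inner_sub_sub_le_of_abs_norm_sq_sub_le (hsq j) (hsq 0)
  have : Nontrivial (Fin (m + 1)) := Fin.nontrivial_iff_two_le.2 (by omega)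
  have ha0 : 0 < a := by
    obtain ⟨i, rfl⟩ := ha.1
    exact hv.infDist_affineSpan_compl_pos i
  have hbound := hv.norm_le_of_abs_inner_vsub_le (by simp) ha0 (fun i => ha.2 ⟨i, rfl⟩) 0 hinner
  have hm0 : (m : ℝ) ≠ 0 := by positivity
  calc ‖x - F x‖ ≤ m * (3 * ξ * L ^ 2) / a := by simpa using hbound
    _ = 3 * ξ * L / t := by rw [ht]; field_simp
end

section
/- A point covered once: Let C be a simplicial complex in EuclideanSpace ℝ (Fin m) (in the sense of Mathlib's Geometry.SimplicialComplex) with finitely many faces, which is pure m-dimensional, i.e. every face is contained in a face with m+1 elements, and suppose every face of C with at least two vertices has thickness at least t₀ > 0. Let F : EuclideanSpace ℝ (Fin m) → EuclideanSpace ℝ (Fin m) fix every vertex of C, and suppose the restriction of F to the convex hull of each (m+1)-element face is a ξ-distortion map with ξ ≤ (1/6)·(m/(m+1))·t₀². Let σ be an (m+1)-element face whose longest edge length is maximal among all faces of C, and let b be the barycentre of σ. Then for every x in the underlying space (carrier) of C, F x = F b implies x = b. -/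
/-!
On a full-dimensional simplex with vertices `vᵢ`, the `i`-th barycentric coordinate is
`1/hᵢ`-Lipschitz, `hᵢ` being the altitude at `vᵢ`. Hence the ball of radius `a(σ)/(m+1)` about
the barycentre, where all coordinates equal `1/(m+1)`, lies in `σ`. Moreover, with `dᵢ` the
coordinates of the vector `y - x`, one has `2‖y - x‖² = ∑ᵢ dᵢ (‖x - vᵢ‖² - ‖y - vᵢ‖²)`. For
`y = F x` each bracket is at most `ξ(2+ξ)L²` because `F` fixes the vertices, so
`‖F x - x‖ ≤ ξ(2+ξ)L/t₀` on every simplex, where `L = L(σ)` is maximal. If `F x = F b`, then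
`‖x - b‖ ≤ 2ξ(2+ξ)L/t₀ ≤ a(σ)/(m+1)`, so `x` lies in `σ`, on which `F` is injective because
`ξ < 1`.
-/

open Metric

/-- The length of the longest edge of the simplex with vertex set `s`. -/
noncomputable def longestEdge {E : Type*} [NormedAddCommGroup E] (s : Finset E) : ℝ :=
  sSup {d : ℝ | ∃ p ∈ s, ∃ q ∈ s, p ≠ q ∧ d = dist p q}

/-- The minimum altitude of the simplex with vertex set `s`: the least distance from a
vertex to the affine span of the remaining vertices. -/
noncomputable def minAltitude {E : Type*} [NormedAddCommGroup E] [NormedSpace ℝ E]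
    (s : Finset E) : ℝ :=
  sInf {d : ℝ | ∃ p ∈ s, d = Metric.infDist p (affineSpan ℝ ((s : Set E) \ {p}) : Set E)}

/-- The thickness `t(σ) = a(σ) / (j · L(σ))` of a `j`-simplex with vertex set `s`
(so `j = s.card - 1`). -/
noncomputable def thickness {E : Type*} [NormedAddCommGroup E] [NormedSpace ℝ E]
    (s : Finset E) : ℝ :=
  minAltitude s / (((s.card : ℝ) - 1) * longestEdge s)

open Set
open scoped RealInnerProductSpace

theorem abs_sq_sub_sq_le_of_abs_sub_le_s1 {α β ξ : ℝ} (hξ : 0 ≤ ξ) (hβ : 0 ≤ β)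
    (h : |α - β| ≤ ξ * β) : |α ^ 2 - β ^ 2| ≤ ξ * (2 + ξ) * β ^ 2 := by
  have hsum : |α + β| ≤ (2 + ξ) * β :=
    calc |α + β| = |(α - β) + 2 * β| := by ring_nf
      _ ≤ |α - β| + |2 * β| := abs_add_le _ _
      _ ≤ (2 + ξ) * β := by rw [abs_of_nonneg (by positivity : 0 ≤ 2 * β)]; linarith
  rw [sq_sub_sq, abs_mul]
  calc |α + β| * |α - β| ≤ (2 + ξ) * β * (ξ * β) :=
        mul_le_mul hsum h (abs_nonneg _) (by positivity)
    _ = ξ * (2 + ξ) * β ^ 2 := by ring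

section Distortion

variable {E E' : Type*} [NormedAddCommGroup E] [NormedAddCommGroup E'] {F : E → E'} {ξ : ℝ}

theorem nonneg_of_abs_norm_sub_le {x y : E} (hxy : x ≠ y)
    (h : |‖F x - F y‖ - ‖x - y‖| ≤ ξ * ‖x - y‖) : 0 ≤ ξ :=
  nonneg_of_mul_nonneg_left ((abs_nonneg _).trans h) (norm_pos_iff.mpr (sub_ne_zero.mpr hxy))

theorem injOn_of_abs_norm_sub_le {s : Set E} (hξ : ξ < 1)
    (h : ∀ x ∈ s, ∀ y ∈ s, |‖F x - F y‖ - ‖x - y‖| ≤ ξ * ‖x - y‖) : s.InjOn F := by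
  intro x hx y hy hxy
  have hle := h x hx y hy
  rw [hxy, sub_self, norm_zero, zero_sub, abs_neg, abs_norm] at hle
  exact sub_eq_zero.mp (norm_eq_zero.mp (by nlinarith [norm_nonneg (x - y)]))

end Distortion

namespace AffineBasis

section NormedSpace

variable {ι E : Type*} [NormedAddCommGroup E] [NormedSpace ℝ E] (b : AffineBasis ι ℝ E)

noncomputable def height (i : ι) : ℝ :=
  infDist (b i) (affineSpan ℝ (range b \ {b i}))

theorem linear_coord_apply (i : ι) (v : E) : (b.coord i).linear v = b.coord i v - b.coord i 0 := by
  simpa using (b.coord i).linearMap_vsub v 0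

variable [Fintype ι]

theorem mem_affineSpan_of_coord_eq_zero {i : ι} {x : E} (hx : b.coord i x = 0) :
    x ∈ affineSpan ℝ (range b \ {b i}) := by
  rw [← b.affineCombination_coord_eq_self x]
  refine affineSpan_mono ℝ ?_ <| affineCombination_mem_affineSpan_image
    (b.sum_coord_apply_eq_one x) (s' := {i}ᶜ) (fun j _ hj => ?_) b
  · rintro _ ⟨j, hj, rfl⟩
    exact ⟨mem_range_self j, fun h => hj (b.ind.injective h)⟩
  · rw [notMem_compl_iff, mem_singleton_iff] at hj
    rwa [hj]

theorem abs_coord_sub_mul_height_le (i : ι) (x y : E) :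
    |b.coord i x - b.coord i y| * b.height i ≤ dist x y := by
  set c := b.coord i x - b.coord i y
  rcases eq_or_ne c 0 with hc | hc
  · simp [hc, dist_nonneg]
  -- `b i - c⁻¹ • (x - y)` has `i`-th coordinate `0`, so it lies on the face opposite `b i`.
  have hz : b.coord i (b i - c⁻¹ • (x - y)) = 0 := by
    have h := (b.coord i).linearMap_vsub (b i - c⁻¹ • (x - y)) (b i)
    rw [vsub_eq_sub, sub_sub_cancel_left, map_neg, map_smul, ← vsub_eq_sub x y,
      (b.coord i).linearMap_vsub, b.coord_apply_eq, smul_eq_mul] at h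
    simp only [vsub_eq_sub] at h
    change -(c⁻¹ * c) = _ at h
    rw [inv_mul_cancel₀ hc] at h
    linarith
  calc |c| * b.height i ≤ |c| * dist (b i) (b i - c⁻¹ • (x - y)) :=
        mul_le_mul_of_nonneg_left (infDist_le_dist_of_mem (b.mem_affineSpan_of_coord_eq_zero hz))
          (abs_nonneg c)
    _ = dist x y := by
        rw [dist_eq_norm, sub_sub_cancel, norm_smul, norm_inv, Real.norm_eq_abs, ← mul_assoc,
          mul_inv_cancel₀ (abs_ne_zero.mpr hc), one_mul, dist_eq_norm]

theorem sum_linear_coord (v : E) : ∑ i, (b.coord i).linear v = 0 := by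
  simp_rw [linear_coord_apply, Finset.sum_sub_distrib, sum_coord_apply_eq_one, sub_self]

theorem sum_linear_coord_smul (v : E) : ∑ i, (b.coord i).linear v • b i = v := by
  simp_rw [linear_coord_apply, sub_smul, Finset.sum_sub_distrib, linear_combination_coord_eq_self,
    sub_zero]

theorem closedBall_centroid_subset_convexHull {a : ℝ} (ha₀ : 0 < a) (ha : ∀ i, a ≤ b.height i) :
    closedBall (Finset.univ.centroid ℝ b) (a / Fintype.card ι) ⊆ convexHull ℝ (range b) := by
  intro z hz
  rw [b.convexHull_eq_nonneg_coord]
  intro i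
  have h := b.abs_coord_sub_mul_height_le i z (Finset.univ.centroid ℝ b)
  rw [b.coord_apply_centroid (Finset.mem_univ i), Finset.card_univ] at h
  have h' : |b.coord i z - (Fintype.card ι : ℝ)⁻¹| * a ≤ a / Fintype.card ι :=
    ((mul_le_mul_of_nonneg_left (ha i) (abs_nonneg _)).trans h).trans (mem_closedBall.mp hz)
  rw [div_eq_inv_mul, mul_le_mul_iff_left₀ ha₀] at h'
  linarith [neg_abs_le (b.coord i z - (Fintype.card ι : ℝ)⁻¹)]

end NormedSpace

section InnerProductSpace

variable {ι E : Type*} [NormedAddCommGroup E] [InnerProductSpace ℝ E] (b : AffineBasis ι ℝ E)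
  [Fintype ι]

theorem norm_sq_eq_sum_linear_coord_mul_inner (v x : E) :
    ‖v‖ ^ 2 = ∑ i, (b.coord i).linear v * ⟪v, b i - x⟫ := by
  simp_rw [inner_sub_right, mul_sub, Finset.sum_sub_distrib, ← Finset.sum_mul, sum_linear_coord,
    zero_mul, sub_zero, ← real_inner_smul_right, ← inner_sum, sum_linear_coord_smul,
    real_inner_self_eq_norm_sq]

theorem two_mul_norm_sub_sq_eq_sum (x y : E) :
    2 * ‖y - x‖ ^ 2 = ∑ i, (b.coord i).linear (y - x) * (‖x - b i‖ ^ 2 - ‖y - b i‖ ^ 2) := by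
  have hdiff : ∀ i, ‖x - b i‖ ^ 2 - ‖y - b i‖ ^ 2 = 2 * ⟪y - x, b i - x⟫ - ‖y - x‖ ^ 2 := by
    intro i
    rw [show y - b i = (y - x) - (b i - x) by abel, norm_sub_sq_real (y - x) (b i - x),
      ← norm_neg (x - b i), neg_sub]
    ring
  simp_rw [hdiff, mul_sub, Finset.sum_sub_distrib, ← Finset.sum_mul, sum_linear_coord, zero_mul,
    sub_zero, b.norm_sq_eq_sum_linear_coord_mul_inner (y - x) x, Finset.mul_sum]
  exact Finset.sum_congr rfl fun i _ => by ring

theorem norm_sub_mul_le_of_abs_norm_sq_sub_le {x y : E} {a c : ℝ} (ha₀ : 0 ≤ a)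
    (ha : ∀ i, a ≤ b.height i) (hc : ∀ i, |‖y - b i‖ ^ 2 - ‖x - b i‖ ^ 2| ≤ c) :
    ‖y - x‖ * a ≤ Fintype.card ι * c / 2 := by
  have hc₀ : 0 ≤ c := by
    obtain ⟨i⟩ := b.nonempty
    exact (abs_nonneg _).trans (hc i)
  have hterm : ∀ i, |(b.coord i).linear (y - x) * (‖x - b i‖ ^ 2 - ‖y - b i‖ ^ 2)| * a ≤
      ‖y - x‖ * c := by
    intro i
    have hcoord : |(b.coord i).linear (y - x)| * a ≤ ‖y - x‖ := by
      rw [← vsub_eq_sub, (b.coord i).linearMap_vsub]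
      simp only [vsub_eq_sub, ← dist_eq_norm]
      exact (mul_le_mul_of_nonneg_left (ha i) (abs_nonneg _)).trans
        (b.abs_coord_sub_mul_height_le i y x)
    rw [abs_mul, abs_sub_comm, mul_right_comm]
    exact mul_le_mul hcoord (hc i) (abs_nonneg _) (norm_nonneg _)
  have key : 2 * ‖y - x‖ ^ 2 * a ≤ Fintype.card ι * ‖y - x‖ * c := by
    calc 2 * ‖y - x‖ ^ 2 * a
        ≤ (∑ i, |(b.coord i).linear (y - x) * (‖x - b i‖ ^ 2 - ‖y - b i‖ ^ 2)|) * a := by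
          rw [b.two_mul_norm_sub_sq_eq_sum x y]
          exact mul_le_mul_of_nonneg_right
            ((le_abs_self _).trans (Finset.abs_sum_le_sum_abs _ _)) ha₀
      _ ≤ ∑ _i : ι, ‖y - x‖ * c := by
          rw [Finset.sum_mul]
          exact Finset.sum_le_sum fun i _ => hterm i
      _ = Fintype.card ι * ‖y - x‖ * c := by
          rw [Finset.sum_const, Finset.card_univ, nsmul_eq_mul, mul_assoc]
  rcases (norm_nonneg (y - x)).eq_or_lt with h | h
  · rw [← h, zero_mul]
    positivity
  · nlinarith

theorem norm_sub_mul_le_of_abs_norm_sub_le {x y : E} {a L ξ : ℝ} (hξ : 0 ≤ ξ) (ha₀ : 0 ≤ a)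
    (ha : ∀ i, a ≤ b.height i) (hL : ∀ i, ‖x - b i‖ ≤ L)
    (h : ∀ i, |‖y - b i‖ - ‖x - b i‖| ≤ ξ * ‖x - b i‖) :
    ‖y - x‖ * a ≤ Fintype.card ι * (ξ * (2 + ξ) * L ^ 2) / 2 :=
  b.norm_sub_mul_le_of_abs_norm_sq_sub_le ha₀ ha fun i =>
    (abs_sq_sub_sq_le_of_abs_sub_le_s1 hξ (norm_nonneg _) (h i)).trans <|
      mul_le_mul_of_nonneg_left (pow_le_pow_left₀ (norm_nonneg _) (hL i) 2) (by positivity)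

end InnerProductSpace

end AffineBasis

theorem AffineIndependent.exists_affineBasis_coe_eq {k V P ι : Type*} [DivisionRing k]
    [AddCommGroup V] [Module k V] [AddTorsor V P] [FiniteDimensional k V] [Fintype ι]
    {p : ι → P} (hp : AffineIndependent k p) (hcard : Fintype.card ι = Module.finrank k V + 1) :
    ∃ b : AffineBasis ι k P, ⇑b = p :=
  ⟨⟨p, hp, hp.affineSpan_eq_top_iff_card_eq_finrank_add_one.2 hcard⟩, rfl⟩

section Simplex

variable {E : Type*} [NormedAddCommGroup E] {s : Finset E}

theorem longestEdge_nonneg (s : Finset E) : 0 ≤ longestEdge s :=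
  Real.sSup_nonneg fun _ ⟨_, _, _, _, _, hd⟩ => hd ▸ dist_nonneg

theorem dist_le_longestEdge {p q : E} (hp : p ∈ s) (hq : q ∈ s) : dist p q ≤ longestEdge s := by
  rcases eq_or_ne p q with rfl | hpq
  · simpa using longestEdge_nonneg s
  have hfin : {d : ℝ | ∃ p ∈ s, ∃ q ∈ s, p ≠ q ∧ d = dist p q}.Finite :=
    ((s ×ˢ s).finite_toSet.image fun pq => dist pq.1 pq.2).subset <| by
      rintro d ⟨p, hp, q, hq, -, rfl⟩
      exact ⟨(p, q), by simp [hp, hq], rfl⟩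
  exact le_csSup hfin.bddAbove ⟨p, hp, q, hq, hpq, rfl⟩

theorem longestEdge_pos (hs : 2 ≤ s.card) : 0 < longestEdge s := by
  obtain ⟨p, hp, q, hq, hpq⟩ := Finset.one_lt_card.mp hs
  exact (dist_pos.mpr hpq).trans_le (dist_le_longestEdge hp hq)

variable [NormedSpace ℝ E]

theorem dist_le_longestEdge_of_mem_convexHull {x p : E} (hx : x ∈ convexHull ℝ (s : Set E))
    (hp : p ∈ s) : dist x p ≤ longestEdge s :=
  convexHull_min (fun _ hq => mem_closedBall.mpr (dist_le_longestEdge hq hp))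
    (convex_closedBall p _) hx

theorem minAltitude_le_infDist {p : E} (hp : p ∈ s) :
    minAltitude s ≤ infDist p (affineSpan ℝ ((s : Set E) \ {p})) := by
  have hfin : {d : ℝ | ∃ p ∈ s, d = infDist p (affineSpan ℝ ((s : Set E) \ {p}) : Set E)}.Finite :=
    (s.finite_toSet.image fun p => infDist p (affineSpan ℝ ((s : Set E) \ {p}) : Set E)).subset
      fun _ ⟨p, hp, hd⟩ => ⟨p, hp, hd.symm⟩
  exact csInf_le hfin.bddBelow ⟨p, hp, rfl⟩

theorem minAltitude_le_longestEdge (hs : 2 ≤ s.card) : minAltitude s ≤ longestEdge s := by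
  obtain ⟨p, hp, q, hq, hpq⟩ := Finset.one_lt_card.mp hs
  calc minAltitude s ≤ infDist p (affineSpan ℝ ((s : Set E) \ {p})) := minAltitude_le_infDist hp
    _ ≤ dist p q := infDist_le_dist_of_mem (subset_affineSpan ℝ _ ⟨hq, hpq.symm⟩)
    _ ≤ longestEdge s := dist_le_longestEdge hp hq

theorem mul_le_minAltitude_of_le_thickness (hs : 2 ≤ s.card) {t : ℝ} (ht : t ≤ thickness s) :
    t * ((s.card - 1) * longestEdge s) ≤ minAltitude s := by
  have hs' : (1 : ℝ) ≤ s.card - 1 := by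
    rw [le_sub_iff_add_le]
    exact_mod_cast hs
  rwa [thickness, le_div_iff₀ (mul_pos (by linarith) (longestEdge_pos hs))] at ht

theorem thickness_le_one (hs : 2 ≤ s.card) : thickness s ≤ 1 := by
  have hs' : (1 : ℝ) ≤ s.card - 1 := by
    rw [le_sub_iff_add_le]
    exact_mod_cast hs
  have hL := longestEdge_pos hs
  exact div_le_one_of_le₀ ((minAltitude_le_longestEdge hs).trans (le_mul_of_one_le_left hL.le hs'))
    (by positivity)

end Simplex

open Module

section BarycentreBall

variable {E : Type*} [NormedAddCommGroup E] [NormedSpace ℝ E] {s : Finset E}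

theorem minAltitude_le_height {b : AffineBasis s ℝ E} (hb : ⇑b = (↑)) (i : s) :
    minAltitude s ≤ b.height i := by
  simpa [AffineBasis.height, hb] using minAltitude_le_infDist i.2

variable [FiniteDimensional ℝ E]

theorem closedBall_subset_convexHull_of_card_eq (hind : AffineIndependent ℝ ((↑) : s → E))
    (hcard : s.card = finrank ℝ E + 1) (ha : 0 < minAltitude s) :
    closedBall ((s.card : ℝ)⁻¹ • ∑ p ∈ s, p) (minAltitude s / s.card) ⊆
      convexHull ℝ (s : Set E) := by
  obtain ⟨b, hb⟩ := hind.exists_affineBasis_coe_eq (by rwa [Fintype.card_coe])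
  have := b.nonempty
  have hcentroid : Finset.univ.centroid ℝ b = (s.card : ℝ)⁻¹ • ∑ p ∈ s, p := by
    rw [Finset.centroid_def, Finset.affineCombination_eq_linear_combination _ _ _
      (Finset.sum_centroidWeights_eq_one_of_nonempty ℝ _ Finset.univ_nonempty)]
    simp [Finset.centroidWeights_apply, ← Finset.smul_sum, hb]
    exact congrArg _ (Finset.sum_attach s id)
  have hball := b.closedBall_centroid_subset_convexHull ha (minAltitude_le_height hb)
  rw [hcentroid, Fintype.card_coe] at hball
  simpa [hb] using hball

theorem closedBall_two_mul_subset_convexHull (hind : AffineIndependent ℝ ((↑) : s → E))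
    (hcard : s.card = finrank ℝ E + 1) (hE : 0 < finrank ℝ E) {t₀ ξ : ℝ} (ht₀ : 0 < t₀)
    (hthick : t₀ ≤ thickness s) (hξ₀ : 0 ≤ ξ)
    (hξ : ξ ≤ 1 / 6 * (finrank ℝ E / (finrank ℝ E + 1)) * t₀ ^ 2) :
    closedBall ((s.card : ℝ)⁻¹ • ∑ p ∈ s, p) (2 * (ξ * (2 + ξ) * longestEdge s / t₀)) ⊆
      convexHull ℝ (s : Set E) := by
  set n : ℝ := (finrank ℝ E : ℝ)
  have hs : 2 ≤ s.card := by omega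
  have hL := longestEdge_pos hs
  have hn : 1 ≤ n := Nat.one_le_cast.mpr hE
  have ha : t₀ * (n * longestEdge s) ≤ minAltitude s := by
    simpa [hcard] using mul_le_minAltitude_of_le_thickness hs hthick
  have hsq : t₀ ^ 2 ≤ 1 := pow_le_one₀ ht₀.le (hthick.trans (thickness_le_one hs))
  have hξn : ξ * (n + 1) ≤ t₀ ^ 2 * n / 6 := by
    have := mul_le_mul_of_nonneg_right hξ (by positivity : (0 : ℝ) ≤ n + 1)
    rwa [show 1 / 6 * (n / (n + 1)) * t₀ ^ 2 * (n + 1) = t₀ ^ 2 * n / 6 by field_simp] at this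
  have hξ₁ : ξ * (2 + ξ) ≤ 13 / 6 * ξ := by
    have : ξ ≤ 1 / 6 := by nlinarith
    nlinarith
  refine (closedBall_subset_closedBall ?_).trans <|
    closedBall_subset_convexHull_of_card_eq hind hcard
      ((by positivity : 0 < t₀ * (n * longestEdge s)).trans_le ha)
  rw [hcard, Nat.cast_add_one]
  calc 2 * (ξ * (2 + ξ) * longestEdge s / t₀) ≤ t₀ * (n * longestEdge s) / (n + 1) := by
        rw [mul_div_assoc', div_le_div_iff₀ ht₀ (by positivity)]
        nlinarith [mul_le_mul_of_nonneg_right hξ₁ (by positivity : 0 ≤ (n + 1) * longestEdge s),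
          mul_le_mul_of_nonneg_right hξn hL.le,
          mul_nonneg (mul_nonneg (sq_nonneg t₀) (by positivity : 0 ≤ n)) hL.le]
    _ ≤ minAltitude s / (n + 1) := by gcongr

end BarycentreBall

section Displacement

variable {E : Type*} [NormedAddCommGroup E] [InnerProductSpace ℝ E] [FiniteDimensional ℝ E]
  {s : Finset E}

theorem norm_sub_le_of_abs_norm_sub_le (hind : AffineIndependent ℝ ((↑) : s → E))
    (hcard : s.card = finrank ℝ E + 1) (hE : 0 < finrank ℝ E) {t₀ ξ : ℝ} (ht₀ : 0 < t₀)
    (hthick : t₀ ≤ thickness s) (hξ : 0 ≤ ξ) {x y : E} (hx : x ∈ convexHull ℝ (s : Set E))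
    (h : ∀ p ∈ s, |‖y - p‖ - ‖x - p‖| ≤ ξ * ‖x - p‖) :
    ‖y - x‖ ≤ ξ * (2 + ξ) * longestEdge s / t₀ := by
  obtain ⟨b, hb⟩ := hind.exists_affineBasis_coe_eq (by rwa [Fintype.card_coe])
  have hs : 2 ≤ s.card := by omega
  have hL := longestEdge_pos hs
  have hn : (1 : ℝ) ≤ finrank ℝ E := by exact_mod_cast hE
  have ha : t₀ * (finrank ℝ E * longestEdge s) ≤ minAltitude s := by
    simpa [hcard] using mul_le_minAltitude_of_le_thickness hs hthick
  have ha₀ : 0 ≤ minAltitude s := (by positivity : 0 ≤ t₀ * (finrank ℝ E * longestEdge s)).trans ha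
  have key := b.norm_sub_mul_le_of_abs_norm_sub_le hξ ha₀ (minAltitude_le_height hb)
    (L := longestEdge s)
    (fun i => by rw [hb, ← dist_eq_norm]; exact dist_le_longestEdge_of_mem_convexHull hx i.2)
    (fun i => by rw [hb]; exact h i i.2)
  rw [Fintype.card_coe, hcard] at key
  rw [le_div_iff₀ ht₀]
  refine le_of_mul_le_mul_right ?_ (by positivity : 0 < finrank ℝ E * longestEdge s)
  calc ‖y - x‖ * t₀ * (finrank ℝ E * longestEdge s) ≤ ‖y - x‖ * minAltitude s := by
        rw [mul_assoc]; exact mul_le_mul_of_nonneg_left ha (norm_nonneg _)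
    _ ≤ _ := key
    _ ≤ ξ * (2 + ξ) * longestEdge s * (finrank ℝ E * longestEdge s) := by
        push_cast
        nlinarith [mul_nonneg (mul_nonneg hξ (by linarith : (0 : ℝ) ≤ 2 + ξ))
          (sq_nonneg (longestEdge s))]

theorem norm_sub_le_of_mem_space {C : Geometry.SimplicialComplex ℝ E} (hE : 0 < finrank ℝ E)
    (hpure : ∀ s ∈ C.faces, ∃ τ ∈ C.faces, s ⊆ τ ∧ τ.card = finrank ℝ E + 1)
    {t₀ ξ L : ℝ} (ht₀ : 0 < t₀) (hthick : ∀ s ∈ C.faces, 2 ≤ s.card → t₀ ≤ thickness s)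
    (hξ₀ : 0 ≤ ξ) (hL : ∀ s ∈ C.faces, longestEdge s ≤ L) {F : E → E}
    (hfix : ∀ s ∈ C.faces, ∀ p ∈ s, F p = p)
    (hdistort : ∀ s ∈ C.faces, s.card = finrank ℝ E + 1 →
      ∀ x ∈ convexHull ℝ (s : Set E), ∀ y ∈ convexHull ℝ (s : Set E),
        |‖F x - F y‖ - ‖x - y‖| ≤ ξ * ‖x - y‖)
    {x : E} (hx : x ∈ C.space) : ‖F x - x‖ ≤ ξ * (2 + ξ) * L / t₀ := by
  obtain ⟨s, hs, hxs⟩ := Geometry.SimplicialComplex.mem_space_iff.mp hx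
  obtain ⟨τ, hτ, hsτ, hτcard⟩ := hpure s hs
  have hxτ : x ∈ convexHull ℝ (τ : Set E) := convexHull_mono (by exact_mod_cast hsτ) hxs
  refine (norm_sub_le_of_abs_norm_sub_le (C.indep hτ) hτcard hE ht₀ (hthick τ hτ (by omega)) hξ₀
    hxτ fun p hp => ?_).trans ?_
  · simpa [hfix τ hτ p hp] using hdistort τ hτ hτcard x hxτ p (subset_convexHull ℝ _ hp)
  · gcongr
    exact hL τ hτ

end Displacement

theorem point_covered_once_general {m : ℕ} (hm : 1 ≤ m)
    (C : Geometry.SimplicialComplex ℝ (EuclideanSpace ℝ (Fin m)))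
    (hpure : ∀ s ∈ C.faces, ∃ τ ∈ C.faces, s ⊆ τ ∧ τ.card = m + 1)
    (t₀ : ℝ) (ht₀ : 0 < t₀)
    (hthick : ∀ s ∈ C.faces, 2 ≤ s.card → t₀ ≤ thickness s)
    (F : EuclideanSpace ℝ (Fin m) → EuclideanSpace ℝ (Fin m))
    (hfix : ∀ s ∈ C.faces, ∀ p ∈ s, F p = p)
    (ξ : ℝ)
    (hξ : ξ ≤ (1 / 6) * ((m : ℝ) / ((m : ℝ) + 1)) * t₀ ^ 2)
    (hdistort : ∀ s ∈ C.faces, s.card = m + 1 →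
      ∀ x ∈ convexHull ℝ (s : Set (EuclideanSpace ℝ (Fin m))),
        ∀ y ∈ convexHull ℝ (s : Set (EuclideanSpace ℝ (Fin m))),
          |‖F x - F y‖ - ‖x - y‖| ≤ ξ * ‖x - y‖)
    (σ : Finset (EuclideanSpace ℝ (Fin m))) (hσ : σ ∈ C.faces) (hσcard : σ.card = m + 1)
    (hσmax : ∀ τ ∈ C.faces, longestEdge τ ≤ longestEdge σ)
    (b : EuclideanSpace ℝ (Fin m)) (hb : b = ((m : ℝ) + 1)⁻¹ • ∑ p ∈ σ, p) :
    ∀ x ∈ C.space, F x = F b → x = b := by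
  intro x hx hFx
  have hE : 0 < finrank ℝ (EuclideanSpace ℝ (Fin m)) := by
    rwa [finrank_euclideanSpace_fin]
  have hσ₂ : 2 ≤ σ.card := by omega
  have hξ₀ : 0 ≤ ξ := by
    obtain ⟨p, hp, q, hq, hpq⟩ := Finset.one_lt_card.mp hσ₂
    exact nonneg_of_abs_norm_sub_le hpq
      (hdistort σ hσ hσcard p (subset_convexHull ℝ _ hp) q (subset_convexHull ℝ _ hq))
  have hξ₁ : ξ < 1 := by
    have ht₁ := (hthick σ hσ hσ₂).trans (thickness_le_one hσ₂)
    have hm₁ : (m : ℝ) / (m + 1) ≤ 1 := div_le_one_of_le₀ (by linarith) (by positivity)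
    nlinarith [pow_le_one₀ ht₀.le ht₁ (n := 2)]
  have hmove : ∀ y ∈ C.space, ‖F y - y‖ ≤ ξ * (2 + ξ) * longestEdge σ / t₀ := fun y hy =>
    norm_sub_le_of_mem_space hE (by simpa using hpure) ht₀ hthick hξ₀ hσmax hfix
      (by simpa using hdistort) hy
  have hball := closedBall_two_mul_subset_convexHull (C.indep hσ) (by simpa using hσcard) hE ht₀
    (hthick σ hσ hσ₂) hξ₀ (by simpa using hξ)
  rw [hσcard, Nat.cast_add_one, ← hb] at hball
  have hbσ : b ∈ convexHull ℝ (σ : Set _) := hball <|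
    mem_closedBall_self (by linarith [(norm_nonneg _).trans (hmove x hx)])
  have hxσ : x ∈ convexHull ℝ (σ : Set _) := hball <| by
    rw [mem_closedBall, dist_eq_norm, two_mul]
    calc ‖x - b‖ = ‖(F b - b) - (F x - x)‖ := by rw [hFx]; abel_nf
      _ ≤ ‖F b - b‖ + ‖F x - x‖ := norm_sub_le _ _
      _ ≤ _ := add_le_add (hmove b (C.convexHull_subset_space hσ hbσ)) (hmove x hx)
  exact injOn_of_abs_norm_sub_le hξ₁ (hdistort σ hσ hσcard) hxσ hbσ hFx

/-- **A point covered once.** In a finite pure `m`-dimensional simplicial complex in `ℝᵐ`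
with all simplices `t₀`-thick, if `F` fixes the vertices and restricts to a `ξ`-distortion
map on each `m`-simplex with `ξ ≤ (1/6)(m/(m+1))t₀²`, then the barycentre `b` of a largest
`m`-simplex satisfies `F⁻¹(F b) = {b}` on the carrier of the complex. -/
theorem point_covered_once {m : ℕ} (hm : 1 ≤ m)
    (C : Geometry.SimplicialComplex ℝ (EuclideanSpace ℝ (Fin m)))
    (hfin : C.faces.Finite)
    (hpure : ∀ s ∈ C.faces, ∃ τ ∈ C.faces, s ⊆ τ ∧ τ.card = m + 1)
    (t₀ : ℝ) (ht₀ : 0 < t₀)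
    (hthick : ∀ s ∈ C.faces, 2 ≤ s.card → t₀ ≤ thickness s)
    (F : EuclideanSpace ℝ (Fin m) → EuclideanSpace ℝ (Fin m))
    (hfix : ∀ s ∈ C.faces, ∀ p ∈ s, F p = p)
    (ξ : ℝ)
    (hξ : ξ ≤ (1 / 6) * ((m : ℝ) / ((m : ℝ) + 1)) * t₀ ^ 2)
    (hdistort : ∀ s ∈ C.faces, s.card = m + 1 →
      ∀ x ∈ convexHull ℝ (s : Set (EuclideanSpace ℝ (Fin m))),
        ∀ y ∈ convexHull ℝ (s : Set (EuclideanSpace ℝ (Fin m))),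
          |‖F x - F y‖ - ‖x - y‖| ≤ ξ * ‖x - y‖)
    (σ : Finset (EuclideanSpace ℝ (Fin m))) (hσ : σ ∈ C.faces) (hσcard : σ.card = m + 1)
    (hσmax : ∀ τ ∈ C.faces, longestEdge τ ≤ longestEdge σ)
    (b : EuclideanSpace ℝ (Fin m)) (hb : b = ((m : ℝ) + 1)⁻¹ • ∑ p ∈ σ, p) :
    ∀ x ∈ C.space, F x = F b → x = b :=
  point_covered_once_general hm C hpure t₀ ht₀ hthick F hfix ξ hξ hdistort σ hσ hσcard hσmax b hb
end

section
/- Distance from the barycentre to the boundary of a full-dimensional simplex: Let v₀, …, v_m be affinely independent points of EuclideanSpace ℝ (Fin m) spanning the m-simplex σ (their convex hull) with minimum altitude a(σ), and let b = (1/(m+1))·(v₀ + ⋯ + v_m) be its barycentre. Then the Euclidean distance from b to the topological frontier of σ is at least a(σ)/(m+1). -/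
/-!
A frontier point `x` of the simplex has a vanishing barycentric coordinate, so it lies in the
affine span `F` of the face opposite some vertex `vᵢ`. The barycentre is the image of `vᵢ` under
the homothety of ratio `1/(m+1)` centred at the centroid of that face; this homothety preserves
`F`, so `dist b x ≥ infDist b F = infDist vᵢ F / (m+1) ≥ a / (m+1)`.
-/

open AffineMap Metric Set

section Homothety

variable {𝕜 V P : Type*} [NormedField 𝕜] [SeminormedAddCommGroup V] [NormedSpace 𝕜 V]
  [PseudoMetricSpace P] [NormedAddTorsor V P]

theorem dist_homothety_homothety (c p q : P) (t : 𝕜) :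
    dist (homothety c t p) (homothety c t q) = ‖t‖ * dist p q := by
  simp only [dist_eq_norm_vsub V, homothety_apply, vadd_vsub_vadd_cancel_right, ← smul_sub,
    vsub_sub_vsub_cancel_right, norm_smul]

theorem AffineSubspace.homothety_mem {F : AffineSubspace 𝕜 P} {c p : P} (hc : c ∈ F) (hp : p ∈ F)
    (t : 𝕜) : homothety c t p ∈ F :=
  F.smul_vsub_vadd_mem t hp hc hc

theorem mul_infDist_le_dist_homothety {F : AffineSubspace 𝕜 P} {c x : P} (hc : c ∈ F)
    (hx : x ∈ F) {t : 𝕜} (ht : t ≠ 0) (y : P) :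
    ‖t‖ * infDist y F ≤ dist (homothety c t y) x := by
  have hx' : homothety c t (homothety c t⁻¹ x) = x := by
    rw [← homothety_mul_apply, mul_inv_cancel₀ ht, homothety_one, id_apply]
  rw [← hx', dist_homothety_homothety]
  gcongr
  exact infDist_le_dist_of_mem (F.homothety_mem hc hx _)

end Homothety

theorem AffineBasis.exists_mem_affineSpan_image_compl_of_mem_frontier_convexHull {ι E : Type*}
    [Fintype ι] [NormedAddCommGroup E] [NormedSpace ℝ E] (B : AffineBasis ι ℝ E) {x : E}
    (hx : x ∈ frontier (convexHull ℝ (range B))) : ∃ i, x ∈ affineSpan ℝ (B '' {i}ᶜ) := by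
  have : FiniteDimensional ℝ E := B.finiteDimensional
  rw [((finite_range B).isCompact_convexHull ℝ).isClosed.frontier_eq, B.interior_convexHull,
    B.convexHull_eq_nonneg_coord] at hx
  obtain ⟨hnonneg, hpos⟩ := hx
  simp only [mem_ofPred_eq, not_forall, not_lt] at hpos
  obtain ⟨i, hi⟩ := hpos
  refine ⟨i, ?_⟩
  rw [← B.affineCombination_coord_eq_self x]
  refine affineCombination_mem_affineSpan_image (B.sum_coord_apply_eq_one x) ?_ B
  intro j _ hj
  rw [mem_compl_singleton_iff, not_not] at hj
  subst hj
  exact le_antisymm hi (hnonneg j)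

theorem Bornology.IsBounded.nonempty_frontier {E : Type*} [NormedAddCommGroup E] [NormedSpace ℝ E]
    [Nontrivial E] {s : Set E} (hb : Bornology.IsBounded s) (hs : s.Nonempty) :
    (frontier s).Nonempty :=
  nonempty_frontier_iff.2 ⟨hs, fun h ↦ NormedSpace.unbounded_univ ℝ E (h ▸ hb)⟩

section Centroid

variable {k V : Type*} [Field k] [CharZero k] [AddCommGroup V] [Module k V] {n : ℕ}

theorem smul_sum_eq_homothety_centroid_erase [NeZero n] (v : Fin (n + 1) → V) (i : Fin (n + 1)) :
    ((n : k) + 1)⁻¹ • ∑ j, v j =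
      homothety ((Finset.univ.erase i).centroid k v) ((n : k) + 1)⁻¹ (v i) := by
  have hn : (n : k) ≠ 0 := NeZero.ne _
  have hc : (Finset.univ.erase i).centroid k v = (n : k)⁻¹ • ∑ j ∈ Finset.univ.erase i, v j := by
    rw [Finset.centroid_def, Finset.affineCombination_eq_linear_combination _ _ _
      (Finset.sum_centroidWeights_eq_one_of_cast_card_ne_zero _ (by simp [hn]))]
    simp only [Finset.centroidWeights_apply, Finset.card_erase_of_mem (Finset.mem_univ i),
      Finset.card_univ, Fintype.card_fin, add_tsub_cancel_right, ← Finset.smul_sum]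
  rw [homothety_apply, vsub_eq_sub, vadd_eq_add, hc,
    ← Finset.add_sum_erase _ v (Finset.mem_univ i)]
  match_scalars <;> field_simp
  ring

theorem centroid_erase_mem_affineSpan_image_compl [NeZero n] (v : Fin (n + 1) → V)
    (i : Fin (n + 1)) :
    (Finset.univ.erase i).centroid k v ∈ affineSpan k (v '' {i}ᶜ) :=
  affineCombination_mem_affineSpan_image
    (Finset.sum_centroidWeights_eq_one_of_cast_card_ne_zero _ (by simp [NeZero.ne]))
    (fun j hj hj' ↦ absurd (mem_compl_singleton_iff.2 (Finset.ne_of_mem_erase hj)) hj') v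

end Centroid

/-- **Barycentre–boundary separation.** The barycentre of a full-dimensional simplex
`σ ⊆ ℝᵐ` with minimum altitude `a` is at distance at least `a/(m+1)` from the
topological frontier of `σ`. -/
theorem barycentre_dist_frontier {m : ℕ}
    (v : Fin (m + 1) → EuclideanSpace ℝ (Fin m))
    (hv : AffineIndependent ℝ v)
    (σ : Set (EuclideanSpace ℝ (Fin m)))
    (hσ : σ = convexHull ℝ (Set.range v))
    (a : ℝ)
    (ha : IsLeast {d : ℝ | ∃ i : Fin (m + 1),
      d = Metric.infDist (v i) (affineSpan ℝ (v '' {i}ᶜ) : Set (EuclideanSpace ℝ (Fin m)))} a)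
    (b : EuclideanSpace ℝ (Fin m))
    (hb : b = ((m : ℝ) + 1)⁻¹ • ∑ i, v i) :
    a / ((m : ℝ) + 1) ≤ Metric.infDist b (frontier σ) := by
  rcases eq_zero_or_neZero m with rfl | _
  · -- in dimension 0 every face is empty, and `infDist _ ∅ = 0`
    obtain ⟨i, rfl⟩ := ha.1
    simp [Subsingleton.eq_univ_of_nonempty]
  let B : AffineBasis (Fin (m + 1)) ℝ (EuclideanSpace ℝ (Fin m)) :=
    ⟨v, hv, hv.affineSpan_eq_top_iff_card_eq_finrank_add_one.2 (by simp)⟩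
  have hσ_bdd : Bornology.IsBounded σ := hσ ▸ ((finite_range v).isCompact_convexHull ℝ).isBounded
  refine (le_infDist (hσ_bdd.nonempty_frontier ?_)).2 fun x hx ↦ ?_
  · exact ⟨v 0, hσ ▸ subset_convexHull ℝ _ (mem_range_self 0)⟩
  rw [hσ] at hx
  obtain ⟨i, hi⟩ := B.exists_mem_affineSpan_image_compl_of_mem_frontier_convexHull hx
  have ht : ((m : ℝ) + 1)⁻¹ ≠ 0 := by positivity
  calc a / ((m : ℝ) + 1) ≤ ‖((m : ℝ) + 1)⁻¹‖ * infDist (v i) (affineSpan ℝ (v '' {i}ᶜ)) := by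
        rw [div_eq_inv_mul, Real.norm_of_nonneg (by positivity)]
        gcongr
        exact ha.2 ⟨i, rfl⟩
    _ ≤ dist b x := by
        rw [hb, smul_sum_eq_homothety_centroid_erase v i]
        exact mul_infDist_le_dist_homothety (centroid_erase_mem_affineSpan_image_compl v i) hi ht _
end

section
/- Differential bounds imply distortion: Let U ⊆ EuclideanSpace ℝ (Fin m) be open, let ω ⊆ U be convex, and let F : U → EuclideanSpace ℝ (Fin m) be differentiable on U and injective on U. Suppose there is a convex set V with F(ω) ⊆ V ⊆ F(U), and suppose ξ < 1 and for every x ∈ U and every vector v, (1 − ξ)·‖v‖ ≤ ‖(fderiv ℝ F x) v‖ ≤ (1 + ξ)·‖v‖. Then the restriction of F to ω is a ξ-distortion map: |‖F x − F y‖ − ‖x − y‖| ≤ ξ·‖x − y‖ for all x, y ∈ ω. -/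
/-!
The upper bound is the mean value inequality on the convex set `ω`. For the lower bound, the
derivative bounds make `F` open at every point of `U` even without `C¹` regularity: for `w` near
`F x`, a minimizer of `‖F y - w‖` over a small closed ball around `x` lies in its interior, where
the surjective derivative forces `F y = w`. Hence `invFunOn F U` is differentiable on `V` with
derivative of norm at most `(1 - ξ)⁻¹`, and the mean value inequality on the convex set `V`
gives `(1 - ξ) ‖x - y‖ ≤ ‖F x - F y‖`.
-/

open Metric Set Function Filter
open scoped Topology

theorem ContinuousLinearMap.exists_equiv_norm_symm_le_of_lowerBound {E : Type*}
    [NormedAddCommGroup E] [NormedSpace ℝ E] [FiniteDimensional ℝ E] (A : E →L[ℝ] E) {c : ℝ}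
    (hc : 0 < c) (hA : ∀ v, c * ‖v‖ ≤ ‖A v‖) :
    ∃ e : E ≃L[ℝ] E, (e : E →L[ℝ] E) = A ∧ ‖(e.symm : E →L[ℝ] E)‖ ≤ c⁻¹ := by
  have hinj : Injective A := (injective_iff_map_eq_zero A).2 fun v hv => by
    have := hA v
    rw [hv, norm_zero] at this
    exact norm_le_zero_iff.1 (nonpos_of_mul_nonpos_right this hc)
  let e : E ≃L[ℝ] E := (LinearEquiv.ofBijective (A : E →ₗ[ℝ] E)
    ⟨hinj, LinearMap.injective_iff_surjective.1 hinj⟩).toContinuousLinearEquiv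
  refine ⟨e, rfl, ContinuousLinearMap.opNorm_le_bound _ (inv_nonneg.2 hc.le) fun u => ?_⟩
  have := hA (e.symm u)
  rw [show A (e.symm u) = u from e.apply_symm_apply u] at this
  rw [inv_mul_eq_div, le_div_iff₀ hc, mul_comm]
  exact this

theorem HasFDerivAt.eventually_half_mul_norm_sub_le {E H : Type*} [NormedAddCommGroup E]
    [NormedSpace ℝ E] [NormedAddCommGroup H] [NormedSpace ℝ H] {F : E → H} {A : E →L[ℝ] H}
    {x : E} {c : ℝ} (hF : HasFDerivAt F A x) (hc : 0 < c) (hA : ∀ v, c * ‖v‖ ≤ ‖A v‖) :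
    ∀ᶠ y in 𝓝 x, c / 2 * ‖y - x‖ ≤ ‖F y - F x‖ := by
  filter_upwards [hF.isLittleO.def (half_pos hc)] with y hy
  have := norm_sub_norm_le (A (y - x)) (F y - F x)
  rw [norm_sub_rev (A (y - x))] at this
  linarith [hA (y - x)]

theorem IsLocalMin.eq_of_norm_sub {E H : Type*} [NormedAddCommGroup E] [NormedSpace ℝ E]
    [NormedAddCommGroup H] [InnerProductSpace ℝ H] {F : E → H} {A : E →L[ℝ] H} {y : E} {w : H}
    (hmin : IsLocalMin (fun y => ‖F y - w‖) y) (hF : HasFDerivAt F A y) (hA : Surjective A) :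
    F y = w := by
  have hmin_sq : IsLocalMin (fun y => ‖F y - w‖ ^ 2) y :=
    hmin.mono fun y' hy' => pow_le_pow_left₀ (norm_nonneg _) hy' 2
  have hzero := hmin_sq.hasFDerivAt_eq_zero (hF.sub_const w).norm_sq
  obtain ⟨v, hv⟩ := hA (F y - w)
  have hv0 := congrArg (· v) hzero
  simp only [smul_apply, ContinuousLinearMap.comp_apply, innerSL_apply_apply,
    hv, real_inner_self_eq_norm_sq, zero_apply, smul_eq_zero,
    OfNat.ofNat_ne_zero, false_or, pow_eq_zero_iff two_ne_zero, norm_eq_zero] at hv0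
  exact sub_eq_zero.1 hv0

theorem image_mem_nhds_of_fderiv_surjective {E H : Type*} [NormedAddCommGroup E]
    [NormedSpace ℝ E] [ProperSpace E] [NormedAddCommGroup H] [InnerProductSpace ℝ H]
    {F : E → H} {s : Set E} {x : E} {c : ℝ} (hc : 0 < c) (hs : s ∈ 𝓝 x)
    (hdiff : ∀ y ∈ s, DifferentiableAt ℝ F y) (hsurj : ∀ y ∈ s, Surjective (fderiv ℝ F y))
    (hx : ∀ v, c * ‖v‖ ≤ ‖fderiv ℝ F x v‖) :
    F '' s ∈ 𝓝 (F x) := by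
  obtain ⟨r, hr, hrs⟩ := nhds_basis_closedBall.mem_iff.1 <| inter_mem hs <|
    ((hdiff x (mem_of_mem_nhds hs)).hasFDerivAt.eventually_half_mul_norm_sub_le hc hx)
  refine mem_nhds_iff.2 ⟨c * r / 4, by positivity, fun w hw => ?_⟩
  rw [mem_ball, dist_comm, dist_eq_norm] at hw
  obtain ⟨y, hy, hmin⟩ := (isCompact_closedBall x r).exists_isMinOn
    ⟨x, mem_closedBall_self hr.le⟩ <| ContinuousOn.norm <| ContinuousOn.sub
      (fun y hy => (hdiff y (hrs hy).1).continuousAt.continuousWithinAt) continuousOn_const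
  have hyw : ‖F y - w‖ ≤ ‖F x - w‖ := hmin (mem_closedBall_self hr.le)
  -- on the sphere of radius `r`, `‖F y - w‖ ≥ c r / 2 - ‖F x - w‖ > ‖F x - w‖`
  have hy_int : y ∈ ball x r := by
    refine mem_ball.2 <| lt_of_le_of_ne (mem_closedBall.1 hy) fun hyr => ?_
    have hlow : c / 2 * ‖y - x‖ ≤ ‖F y - F x‖ := (hrs hy).2
    rw [← dist_eq_norm, hyr] at hlow
    have := norm_sub_le_norm_sub_add_norm_sub (F y) w (F x)
    rw [norm_sub_rev w] at this
    linarith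
  have hmin_loc : IsLocalMin (fun y => ‖F y - w‖) y :=
    hmin.isLocalMin (mem_of_superset (isOpen_ball.mem_nhds hy_int) ball_subset_closedBall)
  exact ⟨y, (hrs hy).1, hmin_loc.eq_of_norm_sub (hdiff y (hrs hy).1).hasFDerivAt
    (hsurj y (hrs hy).1)⟩

section Inverse

variable {E : Type*} [NormedAddCommGroup E] [InnerProductSpace ℝ E] [FiniteDimensional ℝ E]
  {U : Set E} {F : E → E} {c : ℝ}

theorem Set.InjOn.differentiableAt_invFunOn_and_norm_fderiv_le (hinj : InjOn F U) (hU : IsOpen U)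
    (hc : 0 < c) (hdiff : ∀ x ∈ U, DifferentiableAt ℝ F x)
    (hbnd : ∀ x ∈ U, ∀ v, c * ‖v‖ ≤ ‖fderiv ℝ F x v‖) {z : E} (hz : z ∈ U) :
    DifferentiableAt ℝ (invFunOn F U) (F z) ∧ ‖fderiv ℝ (invFunOn F U) (F z)‖ ≤ c⁻¹ := by
  have hsurj : ∀ x ∈ U, Surjective (fderiv ℝ F x) := fun x hx => by
    obtain ⟨e, he, -⟩ := (fderiv ℝ F x).exists_equiv_norm_symm_le_of_lowerBound hc (hbnd x hx)
    exact he ▸ e.surjective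
  have hopen : ∀ s ∈ 𝓝 z, s ⊆ U → F '' s ∈ 𝓝 (F z) := fun s hs hsU =>
    image_mem_nhds_of_fderiv_surjective hc hs (fun x hx => hdiff x (hsU hx))
      (fun x hx => hsurj x (hsU hx)) (hbnd z hz)
  have hGz : invFunOn F U (F z) = z := hinj.leftInvOn_invFunOn hz
  have hcont : ContinuousAt (invFunOn F U) (F z) := fun s hs => by
    rw [hGz] at hs
    refine mem_map.2 <|
      mem_of_superset (hopen _ (inter_mem hs (hU.mem_nhds hz)) inter_subset_right) ?_
    rintro _ ⟨x, hx, rfl⟩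
    rw [mem_preimage, hinj.leftInvOn_invFunOn hx.2]
    exact hx.1
  have hright : ∀ᶠ w in 𝓝 (F z), F (invFunOn F U w) = w := by
    filter_upwards [hopen U (hU.mem_nhds hz) subset_rfl] with w hw using invFunOn_eq hw
  obtain ⟨e, he, he_symm⟩ :=
    (fderiv ℝ F z).exists_equiv_norm_symm_le_of_lowerBound hc (hbnd z hz)
  have hF : HasFDerivAt F (e : E →L[ℝ] E) (invFunOn F U (F z)) := by
    rw [hGz, he]
    exact (hdiff z hz).hasFDerivAt
  have hG := HasFDerivAt.of_local_left_inverse hcont hF hright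
  exact ⟨hG.differentiableAt, hG.fderiv ▸ he_symm⟩

theorem Convex.mul_norm_sub_le_norm_image_sub {V : Set E} (hV : Convex ℝ V) (hVU : V ⊆ F '' U)
    (hinj : InjOn F U) (hU : IsOpen U) (hc : 0 < c) (hdiff : ∀ x ∈ U, DifferentiableAt ℝ F x)
    (hbnd : ∀ x ∈ U, ∀ v, c * ‖v‖ ≤ ‖fderiv ℝ F x v‖) {x y : E} (hx : x ∈ U) (hy : y ∈ U)
    (hFx : F x ∈ V) (hFy : F y ∈ V) :
    c * ‖x - y‖ ≤ ‖F x - F y‖ := by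
  have hG : ∀ w ∈ V, DifferentiableAt ℝ (invFunOn F U) w ∧
      ‖fderiv ℝ (invFunOn F U) w‖ ≤ c⁻¹ := fun w hw => by
    obtain ⟨z, hz, rfl⟩ := hVU hw
    exact hinj.differentiableAt_invFunOn_and_norm_fderiv_le hU hc hdiff hbnd hz
  have := hV.norm_image_sub_le_of_norm_fderiv_le (fun w hw => (hG w hw).1)
    (fun w hw => (hG w hw).2) hFy hFx
  rw [hinj.leftInvOn_invFunOn hx, hinj.leftInvOn_invFunOn hy, inv_mul_eq_div,
    le_div_iff₀ hc, mul_comm] at this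
  exact this

end Inverse

/-- **Differential bounds imply distortion.** If `F` is differentiable and injective on an
open set `U`, `ω ⊆ U` is convex, `F(ω) ⊆ V ⊆ F(U)` for some convex `V`, `ξ < 1`, and the
differential satisfies `(1-ξ)‖v‖ ≤ ‖dF_x v‖ ≤ (1+ξ)‖v‖` everywhere on `U`, then the
restriction of `F` to `ω` is a `ξ`-distortion map. -/
theorem differential_bounds_imply_distortion {m : ℕ}
    (U ω V : Set (EuclideanSpace ℝ (Fin m))) (hU : IsOpen U)
    (hωU : ω ⊆ U) (hω : Convex ℝ ω) (hV : Convex ℝ V)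
    (F : EuclideanSpace ℝ (Fin m) → EuclideanSpace ℝ (Fin m))
    (hdiff : ∀ x ∈ U, DifferentiableAt ℝ F x)
    (hinj : Set.InjOn F U)
    (hωV : F '' ω ⊆ V) (hVU : V ⊆ F '' U)
    (ξ : ℝ) (hξ : ξ < 1)
    (hbnd : ∀ x ∈ U, ∀ v : EuclideanSpace ℝ (Fin m),
      (1 - ξ) * ‖v‖ ≤ ‖fderiv ℝ F x v‖ ∧ ‖fderiv ℝ F x v‖ ≤ (1 + ξ) * ‖v‖) :
    ∀ x ∈ ω, ∀ y ∈ ω, |‖F x - F y‖ - ‖x - y‖| ≤ ξ * ‖x - y‖ := by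
  intro x hx y hy
  rcases eq_or_ne x y with rfl | hxy
  · simp
  have hξ₀ : 0 ≤ ξ := by
    have := hbnd x (hωU hx) (x - y)
    have : 0 < ‖x - y‖ := norm_pos_iff.2 (sub_ne_zero.2 hxy)
    nlinarith
  have hupper : ‖F x - F y‖ ≤ (1 + ξ) * ‖x - y‖ :=
    hω.norm_image_sub_le_of_norm_fderiv_le (fun z hz => hdiff z (hωU hz))
      (fun z hz => ContinuousLinearMap.opNorm_le_bound _ (by linarith)
        fun v => (hbnd z (hωU hz) v).2) hy hx
  have hlower : (1 - ξ) * ‖x - y‖ ≤ ‖F x - F y‖ :=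
    hV.mul_norm_sub_le_norm_image_sub hVU hinj hU (by linarith) hdiff
      (fun z hz v => (hbnd z hz v).1) (hωU hx) (hωU hy) (hωV ⟨x, hx, rfl⟩) (hωV ⟨y, hy, rfl⟩)
  rw [abs_le]
  constructor <;> linarith
end

section
/- Federer's tangent estimate from empty tangent balls: Let M ⊆ EuclideanSpace ℝ (Fin N), let x ∈ M, let R > 0, and let T be a linear subspace such that for every unit vector u in the orthogonal complement T⊥, the open ball of radius R centred at x + R•u is disjoint from M. Then for every y ∈ M, infDist (y − x) T ≤ ‖y − x‖²/(2R); equivalently, the sine of the angle between the segment [x, y] and T is at most ‖y − x‖/(2R). -/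
/-!
Write `v = y - x` and let `q` be the component of `v` orthogonal to `T`, so that
`infDist v T = ‖q‖ = ⟪v, u⟫` for the unit normal `u = q / ‖q‖`. Since `y` lies outside the ball
of radius `R` centred at `x + R • u`, expanding `‖v - R • u‖² ≥ R²` gives `2 R ⟪v, u⟫ ≤ ‖v‖²`.
-/

open Metric RealInnerProductSpace

variable {E : Type*} [NormedAddCommGroup E] [InnerProductSpace ℝ E]

theorem two_mul_inner_le_norm_sq_of_notMem_ball {x y u : E} {R : ℝ} (hR : 0 ≤ R)
    (hu : ‖u‖ = 1) (hy : y ∉ ball (x + R • u) R) :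
    2 * R * ⟪y - x, u⟫ ≤ ‖y - x‖ ^ 2 := by
  have hdist : R ≤ ‖(y - x) - R • u‖ := by
    rw [mem_ball, not_lt, dist_eq_norm] at hy
    rwa [sub_sub]
  have hexpand : ‖(y - x) - R • u‖ ^ 2 = ‖y - x‖ ^ 2 - 2 * R * ⟪y - x, u⟫ + R ^ 2 := by
    rw [norm_sub_sq_real, real_inner_smul_right, norm_smul, hu, Real.norm_of_nonneg hR]
    ring
  nlinarith [pow_le_pow_left₀ hR hdist 2]

theorem infDist_le_of_forall_inner_unit_orthogonal_le {K : Submodule ℝ E}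
    [K.HasOrthogonalProjection] {v : E} {c : ℝ} (hc : 0 ≤ c)
    (h : ∀ u : E, ‖u‖ = 1 → u ∈ Kᗮ → ⟪v, u⟫ ≤ c) :
    infDist v (K : Set E) ≤ c := by
  set q := v - K.starProjection v
  have hdist : infDist v (K : Set E) ≤ ‖q‖ := by
    simpa only [dist_eq_norm] using infDist_le_dist_of_mem (K.starProjection_apply_mem v)
  refine hdist.trans ?_
  rcases eq_or_ne q 0 with hq | hq
  · simpa [hq] using hc
  have hq_pos : 0 < ‖q‖ := norm_pos_iff.mpr hq
  have hinner : ⟪v, ‖q‖⁻¹ • q⟫ = ‖q‖ := by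
    have hproj : ⟪K.starProjection v, q⟫ = 0 :=
      K.inner_right_of_mem_orthogonal (K.starProjection_apply_mem v)
        (K.sub_starProjection_mem_orthogonal v)
    have hvq : ⟪v, q⟫ = ‖q‖ ^ 2 := by
      rw [← sub_add_cancel v (K.starProjection v), inner_add_left, hproj, add_zero,
        real_inner_self_eq_norm_sq]
    rw [real_inner_smul_right, hvq]
    field_simp
  rw [← hinner]
  refine h _ ?_ (Kᗮ.smul_mem _ (K.sub_starProjection_mem_orthogonal v))
  rw [norm_smul, norm_inv, norm_norm, inv_mul_cancel₀ hq_pos.ne']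

theorem federer_tangent_estimate_general {N : ℕ}
    (M : Set (EuclideanSpace ℝ (Fin N)))
    (x : EuclideanSpace ℝ (Fin N))
    (R : ℝ) (hR : 0 < R)
    (T : Submodule ℝ (EuclideanSpace ℝ (Fin N)))
    (hball : ∀ u : EuclideanSpace ℝ (Fin N), ‖u‖ = 1 → u ∈ Tᗮ →
      M ∩ Metric.ball (x + R • u) R = ∅) :
    ∀ y ∈ M, Metric.infDist (y - x) (T : Set (EuclideanSpace ℝ (Fin N))) ≤
      ‖y - x‖ ^ 2 / (2 * R) := by
  intro y hy
  refine infDist_le_of_forall_inner_unit_orthogonal_le (by positivity) fun u hu huT => ?_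
  have hy_out : y ∉ ball (x + R • u) R := fun hy_in =>
    (Set.eq_empty_iff_forall_notMem.mp (hball u hu huT)) y ⟨hy, hy_in⟩
  rw [le_div_iff₀ (by positivity), mul_comm]
  exact two_mul_inner_le_norm_sq_of_notMem_ball hR.le hu hy_out

/-- **Federer's tangent estimate from empty tangent balls.** If every open ball of radius
`R` tangent to `M` at `x` from a direction normal to `T` misses `M`, then every `y ∈ M`
satisfies `infDist (y - x) T ≤ ‖y - x‖² / (2R)`. -/
theorem federer_tangent_estimate {N : ℕ}
    (M : Set (EuclideanSpace ℝ (Fin N)))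
    (x : EuclideanSpace ℝ (Fin N)) (hx : x ∈ M)
    (R : ℝ) (hR : 0 < R)
    (T : Submodule ℝ (EuclideanSpace ℝ (Fin N)))
    (hball : ∀ u : EuclideanSpace ℝ (Fin N), ‖u‖ = 1 → u ∈ Tᗮ →
      M ∩ Metric.ball (x + R • u) R = ∅) :
    ∀ y ∈ M, Metric.infDist (y - x) (T : Set (EuclideanSpace ℝ (Fin N))) ≤
      ‖y - x‖ ^ 2 / (2 * R) :=
  federer_tangent_estimate_general M x R hR T hball
end

section
/- Whitney's angle bound: Let v₀, …, v_j be affinely independent points of EuclideanSpace ℝ (Fin N) spanning a j-simplex σ with thickness t and longest edge length L, and let K be an affine subspace whose direction has dimension k ≥ j. If the distance from each vertex v_i to K is at most η, then sin ∠(σ, K) ≤ 2η/(tL); that is, for every vector u in the direction of the affine span of v₀, …, v_j, infDist(u, direction of K) ≤ (2η/(tL))·‖u‖. -/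
/-! Write `u = ∑ wᵢ vᵢ` with `∑ wᵢ = 0`. Pairing `u` with the altitude vector from `vᵢ` to the
opposite facet kills every term but the `i`-th, so `|wᵢ| a ≤ ‖u‖`. Replacing each `vᵢ` by a nearest
point `qᵢ ∈ K` turns `u` into `∑ wᵢ qᵢ ∈ K.direction`, at distance at most
`∑ |wᵢ| η ≤ (j + 1) η ‖u‖ / a`; since `j + 1 ≤ 2j` and `tL = a / j`, this is at most
`2η ‖u‖ / (tL)`. -/

open Metric Finset
open scoped RealInnerProductSpace

section AffineSpace

variable {ι k V P : Type*} [Ring k] [AddCommGroup V] [Module k V] [AddTorsor V P]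

theorem mem_vectorSpan_iff_eq_univ_weightedVSub [Fintype ι] {p : ι → P} {v : V} :
    v ∈ vectorSpan k (Set.range p) ↔ ∃ w : ι → k, ∑ i, w i = 0 ∧ v = univ.weightedVSub p w := by
  classical
  refine ⟨fun hv => ?_, fun ⟨w, hw, hv⟩ => hv ▸ weightedVSub_mem_vectorSpan hw p⟩
  obtain ⟨s, w, hw, rfl⟩ := (mem_vectorSpan_iff_eq_weightedVSub k).mp hv
  refine ⟨Set.indicator s w, ?_, s.weightedVSub_indicator_subset w p (subset_univ s)⟩
  rwa [sum_indicator_subset w (subset_univ s)]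

end AffineSpace

section NormedSpace

variable {ι V P : Type*} [NormedAddCommGroup V] [NormedSpace ℝ V] [MetricSpace P]
  [NormedAddTorsor V P]

theorem AffineIndependent.infDist_affineSpan_image_compl_pos [Finite ι] [Nontrivial ι]
    {p : ι → P} (hp : AffineIndependent ℝ p) (i : ι) :
    0 < infDist (p i) (affineSpan ℝ (p '' {i}ᶜ)) := by
  obtain ⟨k, hk⟩ := exists_ne i
  have hne : (affineSpan ℝ (p '' {i}ᶜ) : Set P).Nonempty := ⟨p k, mem_affineSpan ℝ ⟨k, hk, rfl⟩⟩
  refine ((affineSpan ℝ _).closed_of_finiteDimensional.notMem_iff_infDist_pos hne).mp ?_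
  simpa [Set.compl_eq_univ_sdiff] using hp.notMem_affineSpan_sdiff i Set.univ

theorem infDist_weightedVSub_direction_le [Fintype ι] (K : AffineSubspace ℝ P) {p q : ι → P}
    (hq : ∀ i, q i ∈ K) {w : ι → ℝ} (hw : ∑ i, w i = 0) :
    infDist (univ.weightedVSub p w) K.direction ≤ ∑ i, |w i| * dist (p i) (q i) := by
  have hqK : univ.weightedVSub q w ∈ K.direction :=
    vectorSpan_mono ℝ (Set.range_subset_iff.mpr hq) (weightedVSub_mem_vectorSpan hw q)
  calc infDist (univ.weightedVSub p w) K.direction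
      ≤ dist (univ.weightedVSub p w) (univ.weightedVSub q w) := infDist_le_dist_of_mem hqK
    _ = ‖∑ i, w i • (p i -ᵥ q i)‖ := by rw [dist_eq_norm, sum_smul_vsub_eq_weightedVSub_sub]
    _ ≤ ∑ i, |w i| * dist (p i) (q i) := by
      refine (norm_sum_le _ _).trans_eq (sum_congr rfl fun i _ => ?_)
      rw [norm_smul, Real.norm_eq_abs, dist_eq_norm_vsub]

end NormedSpace

section InnerProductSpace

variable {ι V P : Type*} [NormedAddCommGroup V] [InnerProductSpace ℝ V] [MetricSpace P]
  [NormedAddTorsor V P]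

theorem abs_mul_infDist_affineSpan_image_compl_le [Fintype ι] (p : ι → P) {w : ι → ℝ}
    (hw : ∑ i, w i = 0) (i : ι) :
    |w i| * infDist (p i) (affineSpan ℝ (p '' {i}ᶜ)) ≤ ‖univ.weightedVSub p w‖ := by
  set F := affineSpan ℝ (p '' {i}ᶜ)
  rcases (F : Set P).eq_empty_or_nonempty with hF | ⟨q₀, hq₀⟩
  · simp [hF]
  have : Nonempty F := ⟨⟨q₀, hq₀⟩⟩
  set q : P := ↑(EuclideanGeometry.orthogonalProjection F (p i))
  set n : V := p i -ᵥ q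
  have hn : n ∈ F.directionᗮ :=
    EuclideanGeometry.vsub_orthogonalProjection_mem_direction_orthogonal F (p i)
  have hun : ⟪univ.weightedVSub p w, n⟫ = w i * (‖n‖ * ‖n‖) := by
    rw [← univ.sum_smul_vsub_const_eq_weightedVSub w p q hw, sum_inner,
      sum_eq_single i _ (by simp), real_inner_smul_left, real_inner_self_eq_norm_mul_norm]
    intro k _ hk
    have hkF : p k -ᵥ q ∈ F.direction := AffineSubspace.vsub_mem_direction
      (mem_affineSpan ℝ ⟨k, hk, rfl⟩) (EuclideanGeometry.orthogonalProjection_mem _)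
    rw [real_inner_smul_left, Submodule.inner_right_of_mem_orthogonal hkF hn, mul_zero]
  rw [← EuclideanGeometry.dist_orthogonalProjection_eq_infDist, dist_eq_norm_vsub V]
  change |w i| * ‖n‖ ≤ ‖univ.weightedVSub p w‖
  rcases (norm_nonneg n).eq_or_lt with h0 | hpos
  · simp [← h0]
  refine le_of_mul_le_mul_right ?_ hpos
  calc |w i| * ‖n‖ * ‖n‖ = |⟪univ.weightedVSub p w, n⟫| := by
        rw [hun, abs_mul, abs_of_nonneg (mul_self_nonneg ‖n‖), mul_assoc]
    _ ≤ ‖univ.weightedVSub p w‖ * ‖n‖ := abs_real_inner_le_norm _ n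

theorem infDist_direction_le_of_mem_direction_affineSpan [Fintype ι] {p q : ι → P} {a η : ℝ}
    (ha : 0 < a) (halt : ∀ i, a ≤ infDist (p i) (affineSpan ℝ (p '' {i}ᶜ)))
    (K : AffineSubspace ℝ P) (hqK : ∀ i, q i ∈ K) (hq : ∀ i, dist (p i) (q i) ≤ η)
    {u : V} (hu : u ∈ (affineSpan ℝ (Set.range p)).direction) :
    infDist u K.direction ≤ Fintype.card ι * η / a * ‖u‖ := by
  rw [direction_affineSpan, mem_vectorSpan_iff_eq_univ_weightedVSub] at hu
  obtain ⟨w, hw, rfl⟩ := hu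
  have hwi : ∀ i, |w i| ≤ ‖univ.weightedVSub p w‖ / a := fun i =>
    (le_div_iff₀ ha).mpr <| (mul_le_mul_of_nonneg_left (halt i) (abs_nonneg _)).trans
      (abs_mul_infDist_affineSpan_image_compl_le p hw i)
  calc infDist (univ.weightedVSub p w) K.direction ≤ ∑ i, |w i| * dist (p i) (q i) :=
        infDist_weightedVSub_direction_le K hqK hw
    _ ≤ ∑ _i : ι, ‖univ.weightedVSub p w‖ / a * η :=
        sum_le_sum fun i _ => mul_le_mul (hwi i) (hq i) dist_nonneg (by positivity)
    _ = Fintype.card ι * η / a * ‖univ.weightedVSub p w‖ := by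
        rw [sum_const, card_univ, nsmul_eq_mul]; ring

end InnerProductSpace

theorem whitney_angle_bound_general {N j : ℕ} (hj : 1 ≤ j)
    (v : Fin (j + 1) → EuclideanSpace ℝ (Fin N))
    (hv : AffineIndependent ℝ v)
    (L a t η : ℝ)
    (hL : IsGreatest {d : ℝ | ∃ i k : Fin (j + 1), i ≠ k ∧ d = ‖v i - v k‖} L)
    (ha : IsLeast {d : ℝ | ∃ i : Fin (j + 1),
      d = Metric.infDist (v i) (affineSpan ℝ (v '' {i}ᶜ) : Set (EuclideanSpace ℝ (Fin N)))} a)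
    (ht : t = a / (j * L))
    (K : AffineSubspace ℝ (EuclideanSpace ℝ (Fin N)))
    (hKne : (K : Set (EuclideanSpace ℝ (Fin N))).Nonempty)
    (hη : ∀ i, Metric.infDist (v i) (K : Set (EuclideanSpace ℝ (Fin N))) ≤ η) :
    ∀ u ∈ (affineSpan ℝ (Set.range v)).direction,
      Metric.infDist u (K.direction : Set (EuclideanSpace ℝ (Fin N))) ≤
        (2 * η / (t * L)) * ‖u‖ := by
  intro u hu
  have : Nontrivial (Fin (j + 1)) := Fin.nontrivial_iff_two_le.mpr (by omega)
  obtain ⟨⟨i₀, k₀, hik, rfl⟩, -⟩ := hL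
  obtain ⟨⟨i₁, ha⟩, halt⟩ := ha
  have hL₀ : 0 < ‖v i₀ - v k₀‖ := norm_pos_iff.mpr (sub_ne_zero.mpr (hv.injective.ne hik))
  have ha₀ : 0 < a := ha ▸ hv.infDist_affineSpan_image_compl_pos i₁
  have hη₀ : 0 ≤ η := infDist_nonneg.trans (hη 0)
  choose q hqK hq using fun i =>
    K.closed_of_finiteDimensional.exists_infDist_eq_dist hKne (v i)
  calc infDist u K.direction ≤ (j + 1) * η / a * ‖u‖ := by
        simpa using infDist_direction_le_of_mem_direction_affineSpan ha₀
          (fun i => halt ⟨i, rfl⟩) K hqK (fun i => (hq i).symm.trans_le (hη i)) hu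
    _ ≤ 2 * j * η / a * ‖u‖ := by
        have hj' : (1 : ℝ) ≤ j := by exact_mod_cast hj
        gcongr
        linarith
    _ = 2 * η / (t * ‖v i₀ - v k₀‖) * ‖u‖ := by
        rw [ht]
        field_simp

/-- **Whitney's angle bound.** If all vertices of a `j`-simplex `σ` with thickness `t` and
longest edge length `L` lie within distance `η` of an affine subspace `K` of dimension
`k ≥ j`, then `sin ∠(σ, K) ≤ 2η/(tL)`: every vector `u` in the direction of the affine
hull of the vertices satisfies `infDist u K.direction ≤ (2η/(tL))·‖u‖`. -/
theorem whitney_angle_bound {N j : ℕ} (hj : 1 ≤ j)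
    (v : Fin (j + 1) → EuclideanSpace ℝ (Fin N))
    (hv : AffineIndependent ℝ v)
    (L a t η : ℝ)
    (hL : IsGreatest {d : ℝ | ∃ i k : Fin (j + 1), i ≠ k ∧ d = ‖v i - v k‖} L)
    (ha : IsLeast {d : ℝ | ∃ i : Fin (j + 1),
      d = Metric.infDist (v i) (affineSpan ℝ (v '' {i}ᶜ) : Set (EuclideanSpace ℝ (Fin N)))} a)
    (ht : t = a / (j * L))
    (K : AffineSubspace ℝ (EuclideanSpace ℝ (Fin N)))
    (hKne : (K : Set (EuclideanSpace ℝ (Fin N))).Nonempty)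
    (hdim : j ≤ Module.finrank ℝ K.direction)
    (hη : ∀ i, Metric.infDist (v i) (K : Set (EuclideanSpace ℝ (Fin N))) ≤ η) :
    ∀ u ∈ (affineSpan ℝ (Set.range v)).direction,
      Metric.infDist u (K.direction : Set (EuclideanSpace ℝ (Fin N))) ≤
        (2 * η / (t * L)) * ‖u‖ :=
  whitney_angle_bound_general hj v hv L a t η hL ha ht K hKne hη
end

section
/- Simplices lie close to the manifold: Let M ⊆ E := EuclideanSpace ℝ (Fin N), let σ ⊆ E be the convex hull of affinely independent points v₀, …, v_j ∈ M with longest edge length L, and let R > 0. Suppose for each x ∈ σ we are given a point π(x) ∈ M and a linear subspace T(x) of E such that: ‖x − π(x)‖ = infDist x M (π(x) is a closest point of M to x); x − π(x) is orthogonal to every vector of T(x); and for all z ∈ M, infDist (z − π(x)) (T(x)) ≤ ‖z − π(x)‖²/(2R). Then for all x, y ∈ σ, the Euclidean distance from y to the affine flat π(x) + T(x) is at most 2L²/R, and in particular infDist x M ≤ 2L²/R for all x ∈ σ. -/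
/-!
The distance to the flat `π x + T x` is a convex function, so on the simplex it is maximised at
a vertex `vᵢ`. Since `vᵢ ∈ M`, Federer's estimate bounds that distance by `‖vᵢ - π x‖² / (2R)`,
and `‖vᵢ - π x‖ ≤ ‖vᵢ - x‖ + infDist x M ≤ 2L` because `σ` has diameter `L` and contains the
vertex `v₀ ∈ M`. Finally, as `x - π x` is normal to `T x`, the point `π x` is the closest point of
that flat to `x`, so `infDist x M = ‖x - π x‖` is bounded by the same quantity.
-/

open Metric Set

section Normed

variable {E : Type*} [NormedAddCommGroup E] [NormedSpace ℝ E]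

theorem convexOn_infDist {s : Set E} (hs : Convex ℝ s) : ConvexOn ℝ univ (infDist · s) := by
  rcases s.eq_empty_or_nonempty with rfl | hne
  · simpa only [infDist_empty] using convexOn_const (0 : ℝ) convex_univ
  refine ⟨convex_univ, fun y₁ _ y₂ _ a b ha hb hab => le_of_forall_pos_le_add fun ε hε => ?_⟩
  obtain ⟨p₁, hp₁, hd₁⟩ := (infDist_lt_iff hne).1 (lt_add_of_pos_right (infDist y₁ s) hε)
  obtain ⟨p₂, hp₂, hd₂⟩ := (infDist_lt_iff hne).1 (lt_add_of_pos_right (infDist y₂ s) hε)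
  calc infDist (a • y₁ + b • y₂) s
      ≤ ‖a • (y₁ - p₁) + b • (y₂ - p₂)‖ := by
        have hsub : a • y₁ + b • y₂ - (a • p₁ + b • p₂) = a • (y₁ - p₁) + b • (y₂ - p₂) := by
          module
        rw [← hsub, ← dist_eq_norm]
        exact infDist_le_dist_of_mem (hs hp₁ hp₂ ha hb hab)
    _ ≤ a * dist y₁ p₁ + b * dist y₂ p₂ := by
        simpa only [norm_smul, Real.norm_of_nonneg ha, Real.norm_of_nonneg hb, dist_eq_norm]
          using norm_add_le (a • (y₁ - p₁)) (b • (y₂ - p₂))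
    _ ≤ a * (infDist y₁ s + ε) + b * (infDist y₂ s + ε) := by
        gcongr
    _ = a • infDist y₁ s + b • infDist y₂ s + ε := by
        rw [smul_eq_mul, smul_eq_mul]
        linear_combination ε * hab

theorem infDist_le_of_mem_convexHull {s t : Set E} {y : E} {C : ℝ} (hs : Convex ℝ s)
    (hC : ∀ a ∈ t, infDist a s ≤ C) (hy : y ∈ convexHull ℝ t) : infDist y s ≤ C := by
  obtain ⟨a, ha, hle⟩ := (convexOn_infDist hs).exists_ge_of_mem_convexHull (subset_univ t) hy
  exact hle.trans (hC a ha)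

theorem dist_le_of_mem_convexHull {s : Set E} {p q : E} {L : ℝ}
    (hL : ∀ a ∈ s, ∀ b ∈ s, dist a b ≤ L) (hp : p ∈ convexHull ℝ s) (hq : q ∈ convexHull ℝ s) :
    dist p q ≤ L := by
  obtain ⟨a, ha, b, hb, hle⟩ := convexHull_exists_dist_ge2 hp hq
  exact hle.trans (hL a ha b hb)

theorem dist_le_of_mem_convexHull_of_isGreatest_edge {ι : Type*} {v : ι → E} {L : ℝ}
    (hL : IsGreatest {d : ℝ | ∃ i k : ι, i ≠ k ∧ d = ‖v i - v k‖} L) {p q : E}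
    (hp : p ∈ convexHull ℝ (range v)) (hq : q ∈ convexHull ℝ (range v)) : dist p q ≤ L := by
  refine dist_le_of_mem_convexHull ?_ hp hq
  rintro _ ⟨i, rfl⟩ _ ⟨k, rfl⟩
  rcases eq_or_ne i k with rfl | hik
  · obtain ⟨i, k, -, rfl⟩ := hL.1
    exact (dist_self _).trans_le (norm_nonneg _)
  · exact (dist_eq_norm _ _).trans_le (hL.2 ⟨i, k, hik, rfl⟩)

end Normed

theorem infDist_image_add_left {E : Type*} [NormedAddCommGroup E] (p x : E) (s : Set E) :
    infDist x ((p + ·) '' s) = infDist (x - p) s := by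
  conv_lhs => rw [← add_sub_cancel p x]
  exact infDist_image (isometry_vadd E p)

theorem norm_sub_le_infDist_of_inner_eq_zero {E : Type*} [NormedAddCommGroup E]
    [InnerProductSpace ℝ E] {K : Submodule ℝ E} {x p : E}
    (hx : ∀ w ∈ K, (inner ℝ (x - p) w : ℝ) = 0) :
    ‖x - p‖ ≤ infDist x ((p + ·) '' (K : Set E)) := by
  rw [infDist_image_add_left, le_infDist ⟨0, K.zero_mem⟩]
  intro w hw
  rw [dist_eq_norm]
  rw [mul_self_le_mul_self_iff (norm_nonneg _) (norm_nonneg _),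
    norm_sub_sq_eq_norm_sq_add_norm_sq_real (hx w hw)]
  exact le_add_of_nonneg_right (mul_self_nonneg _)

theorem simplices_lie_close_to_manifold_general {N j : ℕ}
    (M : Set (EuclideanSpace ℝ (Fin N)))
    (v : Fin (j + 1) → EuclideanSpace ℝ (Fin N))
    (hvM : ∀ i, v i ∈ M)
    (σ : Set (EuclideanSpace ℝ (Fin N)))
    (hσ : σ = convexHull ℝ (Set.range v))
    (L : ℝ)
    (hL : IsGreatest {d : ℝ | ∃ i k : Fin (j + 1), i ≠ k ∧ d = ‖v i - v k‖} L)
    (R : ℝ) (hR : 0 < R)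
    (π : EuclideanSpace ℝ (Fin N) → EuclideanSpace ℝ (Fin N))
    (T : EuclideanSpace ℝ (Fin N) → Submodule ℝ (EuclideanSpace ℝ (Fin N)))
    (hclosest : ∀ x ∈ σ, ‖x - π x‖ = Metric.infDist x M)
    (horth : ∀ x ∈ σ, ∀ w ∈ T x, (inner ℝ (x - π x) w : ℝ) = 0)
    (hfed : ∀ x ∈ σ, ∀ z ∈ M,
      Metric.infDist (z - π x) (T x : Set (EuclideanSpace ℝ (Fin N))) ≤
        ‖z - π x‖ ^ 2 / (2 * R)) :
    (∀ x ∈ σ, ∀ y ∈ σ,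
        Metric.infDist y ((π x + ·) '' (T x : Set (EuclideanSpace ℝ (Fin N)))) ≤
          2 * L ^ 2 / R) ∧
      ∀ x ∈ σ, Metric.infDist x M ≤ 2 * L ^ 2 / R := by
  have hdiam : ∀ p ∈ σ, ∀ q ∈ σ, dist p q ≤ L := fun p hp q hq =>
    dist_le_of_mem_convexHull_of_isGreatest_edge hL (hσ ▸ hp) (hσ ▸ hq)
  have hvσ : ∀ i, v i ∈ σ := fun i => hσ ▸ subset_convexHull ℝ _ ⟨i, rfl⟩
  have hnear : ∀ x ∈ σ, ‖x - π x‖ ≤ L := fun x hx =>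
    (hclosest x hx).trans_le ((infDist_le_dist_of_mem (hvM 0)).trans (hdiam x hx _ (hvσ 0)))
  have hflat : ∀ x ∈ σ, ∀ y ∈ σ,
      infDist y ((π x + ·) '' (T x : Set (EuclideanSpace ℝ (Fin N)))) ≤ 2 * L ^ 2 / R := by
    intro x hx y hy
    refine infDist_le_of_mem_convexHull ((T x).convex.translate (π x)) ?_ (hσ ▸ hy)
    rintro _ ⟨i, rfl⟩
    have hvπ : ‖v i - π x‖ ≤ 2 * L := by
      linarith [norm_sub_le_norm_sub_add_norm_sub (v i) x (π x), hnear x hx,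
        dist_eq_norm (v i) x ▸ hdiam _ (hvσ i) x hx]
    calc infDist (v i) ((π x + ·) '' (T x : Set (EuclideanSpace ℝ (Fin N))))
        = infDist (v i - π x) (T x) := infDist_image_add_left _ _ _
      _ ≤ ‖v i - π x‖ ^ 2 / (2 * R) := hfed x hx (v i) (hvM i)
      _ ≤ (2 * L) ^ 2 / (2 * R) := by gcongr
      _ = 2 * L ^ 2 / R := by field_simp
  refine ⟨hflat, fun x hx => ?_⟩
  rw [← hclosest x hx]
  exact (norm_sub_le_infDist_of_inner_eq_zero (horth x hx)).trans (hflat x hx x hx)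

/-- **Simplices lie close to the manifold.** Let `σ` be a simplex with vertices on
`M ⊆ ℝᴺ` and longest edge length `L`. If for each `x ∈ σ`, `π x` is a closest point of
`M` to `x`, `x - π x` is normal to the tangent space `T x` at `π x`, and Federer's
tangent estimate holds at `π x` with reach bound `R`, then each `y ∈ σ` lies within
`2L²/R` of every flat `π x + T x`, and `infDist x M ≤ 2L²/R` for all `x ∈ σ`. -/
theorem simplices_lie_close_to_manifold {N j : ℕ}
    (M : Set (EuclideanSpace ℝ (Fin N)))
    (v : Fin (j + 1) → EuclideanSpace ℝ (Fin N))
    (hv : AffineIndependent ℝ v) (hvM : ∀ i, v i ∈ M)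
    (σ : Set (EuclideanSpace ℝ (Fin N)))
    (hσ : σ = convexHull ℝ (Set.range v))
    (L : ℝ)
    (hL : IsGreatest {d : ℝ | ∃ i k : Fin (j + 1), i ≠ k ∧ d = ‖v i - v k‖} L)
    (R : ℝ) (hR : 0 < R)
    (π : EuclideanSpace ℝ (Fin N) → EuclideanSpace ℝ (Fin N))
    (T : EuclideanSpace ℝ (Fin N) → Submodule ℝ (EuclideanSpace ℝ (Fin N)))
    (hπM : ∀ x ∈ σ, π x ∈ M)
    (hclosest : ∀ x ∈ σ, ‖x - π x‖ = Metric.infDist x M)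
    (horth : ∀ x ∈ σ, ∀ w ∈ T x, (inner ℝ (x - π x) w : ℝ) = 0)
    (hfed : ∀ x ∈ σ, ∀ z ∈ M,
      Metric.infDist (z - π x) (T x : Set (EuclideanSpace ℝ (Fin N))) ≤
        ‖z - π x‖ ^ 2 / (2 * R)) :
    (∀ x ∈ σ, ∀ y ∈ σ,
        Metric.infDist y ((π x + ·) '' (T x : Set (EuclideanSpace ℝ (Fin N)))) ≤
          2 * L ^ 2 / R) ∧
      ∀ x ∈ σ, Metric.infDist x M ≤ 2 * L ^ 2 / R :=
  simplices_lie_close_to_manifold_general M v hvM σ hσ L hL R hR π T hclosest horth hfed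
end

section
/- Distortion of the coordinate projection onto a tangent space: Let M ⊆ E := EuclideanSpace ℝ (Fin N), let p ∈ M, let R > 0 and 0 < ρ < 1/2, and set U = M ∩ (open ball of radius ρR centred at p). Suppose for each x ∈ U we are given a linear subspace T(x) of E such that: for all z ∈ M, infDist (z − x) (T(x)) ≤ ‖z − x‖²/(2R) (local reach at least R); and for every u ∈ T(x), infDist u (T(p)) ≤ (‖x − p‖/R)·‖u‖ (tangent space variation). Let P be the orthogonal projection of E onto T(p). Then P restricted to U is a 4ρ²-distortion map: for all x, y ∈ U, |‖P y − P x‖ − ‖y − x‖| ≤ 4ρ²·‖y − x‖. -/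
/-!
Write `v = y - x` and `P` for the projection onto `T p`. By Pythagoras
`‖v‖ - ‖P v‖ ≤ d(v, T p)² / ‖v‖`, so it suffices that the chord `v` is `2ρ`-close to `T p`,
i.e. `d(v, T p) ≤ 2ρ‖v‖`. A short chord (`‖v‖ ≤ ρR`) lies within `‖v‖²/(2R) ≤ ρ‖v‖/2` of `T x`
by the tangent estimate at `x`, and `T x` is tilted by at most `ρ` against `T p`. For a long chord
the tangent estimate at `p` puts `x - p` and `y - p` within `ρ²R/2` of `T p`, and `ρ²R < ρ‖v‖`.
-/

open Metric

theorem AddSubgroup.infDist_sub_le {M : Type*} [SeminormedAddCommGroup M] (S : AddSubgroup M)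
    (a b : M) : infDist (a - b) S ≤ infDist a S + infDist b S := by
  simpa only [← QuotientAddGroup.norm_mk, QuotientAddGroup.mk_sub] using
    norm_sub_le (a : M ⧸ S) b

namespace Submodule

variable {𝕜 E : Type*} [RCLike 𝕜] [NormedAddCommGroup E] [InnerProductSpace 𝕜 E]

theorem norm_sub_starProjection_eq_infDist (K : Submodule 𝕜 E) [K.HasOrthogonalProjection]
    (v : E) : ‖v - K.starProjection v‖ = infDist v K := by
  rw [infDist_eq_iInf, starProjection_minimal]
  simp_rw [dist_eq_norm]
  rfl

theorem norm_sq_eq_norm_starProjection_sq_add_infDist_sq (K : Submodule 𝕜 E)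
    [K.HasOrthogonalProjection] (v : E) :
    ‖v‖ ^ 2 = ‖K.starProjection v‖ ^ 2 + infDist v K ^ 2 := by
  simpa [← norm_sub_starProjection_eq_infDist] using K.norm_sq_eq_add_norm_sq_starProjection v

theorem abs_norm_starProjection_sub_norm_le (K : Submodule 𝕜 E) [K.HasOrthogonalProjection]
    {v : E} {ε : ℝ} (h : infDist v K ≤ ε * ‖v‖) :
    |‖K.starProjection v‖ - ‖v‖| ≤ ε ^ 2 * ‖v‖ := by
  have hpyth := K.norm_sq_eq_norm_starProjection_sq_add_infDist_sq v
  have hle : ‖K.starProjection v‖ ≤ ‖v‖ := K.norm_starProjection_apply_le v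
  have hd : infDist v K ^ 2 ≤ (ε * ‖v‖) ^ 2 := pow_le_pow_left₀ infDist_nonneg h 2
  rw [abs_of_nonpos (by linarith), neg_sub]
  rcases (norm_nonneg v).eq_or_lt with hv0 | hvpos
  · rw [← hv0] at hle ⊢
    linarith [norm_nonneg (K.starProjection v)]
  refine le_of_mul_le_mul_right ?_ hvpos
  nlinarith [norm_nonneg (K.starProjection v)]

theorem infDist_le_of_infDist_le_of_forall_infDist_le (K L : Submodule 𝕜 E)
    [L.HasOrthogonalProjection] {v : E} {a c : ℝ} (hc : 0 ≤ c) (hv : infDist v L ≤ a)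
    (hLK : ∀ w ∈ L, infDist w K ≤ c * ‖w‖) :
    infDist v K ≤ a + c * (‖v‖ + a) := by
  set w := L.starProjection v
  have hvw : dist v w ≤ a := by rwa [dist_eq_norm, norm_sub_starProjection_eq_infDist]
  have hw : ‖w‖ ≤ ‖v‖ + a := by
    have := norm_le_norm_add_norm_sub' w v
    rw [← dist_eq_norm, dist_comm] at this
    linarith
  calc infDist v K ≤ infDist w K + dist v w := infDist_le_infDist_add_dist
    _ ≤ c * ‖w‖ + a := add_le_add (hLK w (L.starProjection_apply_mem v)) hvw
    _ ≤ a + c * (‖v‖ + a) := by nlinarith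

end Submodule

theorem infDist_sub_le_two_mul_norm {𝕜 E : Type*} [RCLike 𝕜] [NormedAddCommGroup E]
    [InnerProductSpace 𝕜 E] (K L : Submodule 𝕜 E) [L.HasOrthogonalProjection] {p x y : E}
    {R ρ : ℝ} (hR : 0 < R) (hρ0 : 0 < ρ) (hρ1 : ρ ≤ 1)
    (hx : ‖x - p‖ ≤ ρ * R) (hy : ‖y - p‖ ≤ ρ * R)
    (hLy : infDist (y - x) L ≤ ‖y - x‖ ^ 2 / (2 * R))
    (hKx : infDist (x - p) K ≤ ‖x - p‖ ^ 2 / (2 * R))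
    (hKy : infDist (y - p) K ≤ ‖y - p‖ ^ 2 / (2 * R))
    (hLK : ∀ w ∈ L, infDist w K ≤ ρ * ‖w‖) :
    infDist (y - x) K ≤ 2 * ρ * ‖y - x‖ := by
  rcases le_or_gt ‖y - x‖ (ρ * R) with hshort | hlong
  · have hL : infDist (y - x) L ≤ ρ * ‖y - x‖ / 2 := by
      refine hLy.trans ?_
      rw [div_le_iff₀ (by positivity)]
      nlinarith [norm_nonneg (y - x)]
    have := K.infDist_le_of_infDist_le_of_forall_infDist_le L hρ0.le hL hLK
    have : ρ * (ρ * ‖y - x‖) ≤ ρ * ‖y - x‖ :=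
      mul_le_of_le_one_left (by positivity) hρ1
    linarith
  · have hsq : ∀ z : E, ‖z - p‖ ≤ ρ * R → ‖z - p‖ ^ 2 / (2 * R) ≤ ρ ^ 2 * R / 2 := by
      intro z hz
      rw [div_le_iff₀ (by positivity)]
      nlinarith [norm_nonneg (z - p)]
    calc infDist (y - x) K = infDist ((y - p) - (x - p)) K := by rw [sub_sub_sub_cancel_right]
      _ ≤ infDist (y - p) K + infDist (x - p) K := K.toAddSubgroup.infDist_sub_le _ _
      _ ≤ ρ * (ρ * R) := by linarith [hsq x hx, hsq y hy]
      _ ≤ 2 * ρ * ‖y - x‖ := by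
        nlinarith [mul_lt_mul_of_pos_left hlong hρ0, norm_nonneg (y - x)]

/-- **Distortion of the coordinate projection onto a tangent space.** Let `M ⊆ ℝᴺ`,
`p ∈ M`, `0 < ρ < 1/2`, and `U = M ∩ B(p, ρR)`. If each `x ∈ U` carries a tangent space
`T x` satisfying Federer's tangent estimate with reach bound `R` and the tangent variation
bound `sin ∠(T x, T p) ≤ ‖x - p‖/R`, then the orthogonal projection onto `T p` restricted
to `U` is a `4ρ²`-distortion map. -/
theorem coordinate_projection_distortion {N : ℕ}
    (M : Set (EuclideanSpace ℝ (Fin N)))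
    (p : EuclideanSpace ℝ (Fin N)) (hp : p ∈ M)
    (R ρ : ℝ) (hR : 0 < R) (hρ0 : 0 < ρ) (hρ : ρ < 1 / 2)
    (U : Set (EuclideanSpace ℝ (Fin N)))
    (hU : U = M ∩ Metric.ball p (ρ * R))
    (T : EuclideanSpace ℝ (Fin N) → Submodule ℝ (EuclideanSpace ℝ (Fin N)))
    (hfed : ∀ x ∈ U, ∀ z ∈ M,
      Metric.infDist (z - x) (T x : Set (EuclideanSpace ℝ (Fin N))) ≤
        ‖z - x‖ ^ 2 / (2 * R))
    (hvar : ∀ x ∈ U, ∀ u ∈ T x,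
      Metric.infDist u (T p : Set (EuclideanSpace ℝ (Fin N))) ≤ (‖x - p‖ / R) * ‖u‖) :
    ∀ x ∈ U, ∀ y ∈ U,
      |‖(Submodule.orthogonalProjectionOnto (T p) y : EuclideanSpace ℝ (Fin N)) -
          (Submodule.orthogonalProjectionOnto (T p) x : EuclideanSpace ℝ (Fin N))‖ - ‖y - x‖| ≤
        4 * ρ ^ 2 * ‖y - x‖ := by
  subst hU
  intro x hx y hy
  have hpU : p ∈ M ∩ ball p (ρ * R) := ⟨hp, mem_ball_self (by positivity)⟩
  have hxp : ‖x - p‖ < ρ * R := by simpa [dist_eq_norm] using hx.2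
  have hyp : ‖y - p‖ < ρ * R := by simpa [dist_eq_norm] using hy.2
  have htilt : ∀ w ∈ T x, infDist w (T p) ≤ ρ * ‖w‖ := fun w hw ↦
    (hvar x hx w hw).trans <| by gcongr; rw [div_le_iff₀ hR]; exact hxp.le
  have hchord := infDist_sub_le_two_mul_norm (T p) (T x) hR hρ0 (by linarith) hxp.le hyp.le
    (hfed x hx y hy.1) (hfed p hpU x hx.1) (hfed p hpU y hy.1) htilt
  have hdist := (T p).abs_norm_starProjection_sub_norm_le hchord
  rw [Submodule.coe_orthogonalProjectionOnto_apply, Submodule.coe_orthogonalProjectionOnto_apply,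
    ← map_sub]
  exact hdist.trans_eq (by ring)
end

section
/- Simplexwise distortion of orthogonal projection onto a tangent space: Let M ⊆ EuclideanSpace ℝ (Fin N), let v₀, …, v_j ∈ M be affinely independent points spanning a j-simplex σ with thickness t and longest edge length L, let p = v₀, let R > 0, and let T be a linear subspace of dimension at least j such that infDist (z − p) T ≤ ‖z − p‖²/(2R) for all z ∈ M. If L < tR, then the orthogonal projection P onto T restricted to σ is a ξ-distortion map with ξ = (L/(tR))²: for all x, y ∈ σ, |‖P y − P x‖ − ‖y − x‖| ≤ (L/(tR))²·‖y − x‖. -/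
/-!
Write `y - x = ∑ eᵢ vᵢ` with `∑ eᵢ = 0`, so that `y - x = ∑_{i ≠ 0} eᵢ (vᵢ - v₀)`.
Moving `vᵢ` to an affine combination of the other vertices costs `‖y - x‖ / |eᵢ|`,
so `|eᵢ| ≤ ‖y - x‖ / a`; by Federer's estimate each edge `vᵢ - v₀` lies within `L² / (2R)`
of `T`. Hence the component of `y - x` normal to `T` has norm at most
`j · (‖y - x‖ / a) · L² / (2R) = (L / (2tR)) ‖y - x‖`, and Pythagoras turns a normal
component of relative size `δ` into a loss of length of relative size at most `δ²`.
-/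

open Finset Metric

section Projection

variable {E : Type*} [NormedAddCommGroup E] [InnerProductSpace ℝ E]
  (T : Submodule ℝ E) [T.HasOrthogonalProjection]

theorem Submodule.norm_starProjection_orthogonal_eq_infDist (w : E) :
    ‖Tᗮ.starProjection w‖ = infDist w (T : Set E) := by
  rw [starProjection_orthogonal_val, starProjection_minimal, infDist_eq_iInf]
  simp only [dist_eq_norm]
  rfl

theorem Submodule.abs_norm_starProjection_sub_norm_le_s12 {u : E} {δ : ℝ}
    (h : ‖Tᗮ.starProjection u‖ ≤ δ * ‖u‖) :
    |‖T.starProjection u‖ - ‖u‖| ≤ δ ^ 2 * ‖u‖ := by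
  have hpyth : ‖u‖ ^ 2 = ‖T.starProjection u‖ ^ 2 + ‖Tᗮ.starProjection u‖ ^ 2 :=
    norm_sq_eq_add_norm_sq_projection u T
  have hle : ‖T.starProjection u‖ ≤ ‖u‖ := T.norm_starProjection_apply_le u
  have hsq : ‖Tᗮ.starProjection u‖ ^ 2 ≤ δ ^ 2 * ‖u‖ ^ 2 := by
    rw [← mul_pow]; exact pow_le_pow_left₀ (norm_nonneg _) h 2
  rw [abs_of_nonpos (sub_nonpos.2 hle), neg_sub]
  rcases (norm_nonneg u).eq_or_lt with hu | hu
  · rw [← hu]; simp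
  -- `(‖u‖ - ‖Pu‖) ‖u‖ ≤ (‖u‖ - ‖Pu‖)(‖u‖ + ‖Pu‖) = ‖u - Pu‖²`
  refine le_of_mul_le_mul_right ?_ hu
  nlinarith [norm_nonneg (T.starProjection u)]

end Projection

section Combination

variable {ι E : Type*} [Fintype ι]

theorem exists_sum_eq_zero_and_sub_eq_sum_smul [AddCommGroup E] [Module ℝ E]
    {v : ι → E} {x y : E} (hx : x ∈ affineSpan ℝ (Set.range v))
    (hy : y ∈ affineSpan ℝ (Set.range v)) :
    ∃ e : ι → ℝ, ∑ i, e i = 0 ∧ y - x = ∑ i, e i • v i := by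
  obtain ⟨c, hc, rfl⟩ := eq_affineCombination_of_mem_affineSpan_of_fintype hx
  obtain ⟨d, hd, rfl⟩ := eq_affineCombination_of_mem_affineSpan_of_fintype hy
  have hsum : ∑ i, (d - c) i = 0 := by simp [Finset.sum_sub_distrib, hc, hd]
  refine ⟨d - c, hsum, ?_⟩
  rw [← vsub_eq_sub, Finset.affineCombination_vsub,
    weightedVSub_eq_linear_combination _ hsum]

/-- A relation `∑ eₖ vₖ = u` with `∑ eₖ = 0` exhibits `vᵢ - eᵢ⁻¹ • u` as an affine combination
of the vertices other than `vᵢ`. -/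
theorem abs_mul_infDist_affineSpan_le [NormedAddCommGroup E] [NormedSpace ℝ E] (v : ι → E)
    {e : ι → ℝ} (he : ∑ k, e k = 0) (i : ι) :
    |e i| * infDist (v i) (affineSpan ℝ (v '' {i}ᶜ) : Set E) ≤ ‖∑ k, e k • v k‖ := by
  classical
  rcases eq_or_ne (e i) 0 with hei | hei
  · simp [hei]
  set w : ι → ℝ := Pi.single i 1 - (e i)⁻¹ • e
  have hw : ∑ k, w k = 1 := by simp [w, Finset.sum_sub_distrib, ← Finset.mul_sum, he]
  have hmem := affineCombination_mem_affineSpan_image hw (s' := {i}ᶜ)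
    (fun k _ hk ↦ by simp_all [w]) v
  have hcomb : ∑ k, w k • v k = v i - (e i)⁻¹ • ∑ k, e k • v k := by
    simp [w, sub_smul, Finset.sum_sub_distrib, Finset.smul_sum, smul_smul]
  rw [univ.affineCombination_eq_linear_combination _ _ hw, hcomb] at hmem
  calc |e i| * infDist (v i) (affineSpan ℝ (v '' {i}ᶜ) : Set E)
      ≤ |e i| * dist (v i) (v i - (e i)⁻¹ • ∑ k, e k • v k) :=
        mul_le_mul_of_nonneg_left (infDist_le_dist_of_mem hmem) (abs_nonneg _)
    _ = ‖∑ k, e k • v k‖ := by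
        rw [dist_eq_norm, sub_sub_cancel, norm_smul, norm_inv, Real.norm_eq_abs,
          ← mul_assoc, mul_inv_cancel₀ (abs_ne_zero.2 hei), one_mul]

end Combination

theorem norm_map_sum_smul_le_of_sum_eq_zero {E F : Type*} [AddCommGroup E] [Module ℝ E]
    [SeminormedAddCommGroup F] [NormedSpace ℝ F] (g : E →ₗ[ℝ] F) {j : ℕ}
    (v : Fin (j + 1) → E) {e : Fin (j + 1) → ℝ} (he : ∑ i, e i = 0) {c η : ℝ}
    (hc : ∀ i, |e i| ≤ c) (hη : ∀ i : Fin j, ‖g (v i.succ - v 0)‖ ≤ η) :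
    ‖g (∑ i, e i • v i)‖ ≤ j * (c * η) := by
  have hedges : ∑ i, e i • v i = ∑ i, e i • (v i - v 0) := by
    simp [smul_sub, Finset.sum_sub_distrib, ← Finset.sum_smul, he]
  have hc0 : 0 ≤ c := (abs_nonneg _).trans (hc 0)
  rw [hedges, Fin.sum_univ_succ, sub_self, smul_zero, zero_add, map_sum]
  calc ‖∑ i : Fin j, g (e i.succ • (v i.succ - v 0))‖
      ≤ ∑ i : Fin j, ‖g (e i.succ • (v i.succ - v 0))‖ := norm_sum_le _ _
    _ ≤ ∑ _i : Fin j, c * η := by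
        refine Finset.sum_le_sum fun i _ ↦ ?_
        rw [map_smul, norm_smul, Real.norm_eq_abs]
        exact mul_le_mul (hc _) (hη i) (norm_nonneg _) hc0
    _ = j * (c * η) := by simp

theorem orthogonal_projection_simplexwise_distortion_general {N j : ℕ}
    (M : Set (EuclideanSpace ℝ (Fin N)))
    (v : Fin (j + 1) → EuclideanSpace ℝ (Fin N))
    (hvM : ∀ i, v i ∈ M)
    (σ : Set (EuclideanSpace ℝ (Fin N)))
    (hσ : σ = convexHull ℝ (Set.range v))
    (L a t : ℝ)
    (hL : IsGreatest {d : ℝ | ∃ i k : Fin (j + 1), i ≠ k ∧ d = ‖v i - v k‖} L)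
    (ha : IsLeast {d : ℝ | ∃ i : Fin (j + 1),
      d = Metric.infDist (v i) (affineSpan ℝ (v '' {i}ᶜ) : Set (EuclideanSpace ℝ (Fin N)))} a)
    (ht : t = a / (j * L))
    (R : ℝ)
    (T : Submodule ℝ (EuclideanSpace ℝ (Fin N)))
    (hfed : ∀ z ∈ M, Metric.infDist (z - v 0) (T : Set (EuclideanSpace ℝ (Fin N))) ≤
      ‖z - v 0‖ ^ 2 / (2 * R))
    (hLtR : L < t * R) :
    ∀ x ∈ σ, ∀ y ∈ σ,
      |‖(T.orthogonalProjectionOnto y : EuclideanSpace ℝ (Fin N)) -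
          (T.orthogonalProjectionOnto x : EuclideanSpace ℝ (Fin N))‖ - ‖y - x‖| ≤
        (L / (t * R)) ^ 2 * ‖y - x‖ := by
  intro x hx y hy
  subst hσ
  obtain ⟨e, he, hyx⟩ := exists_sum_eq_zero_and_sub_eq_sum_smul
    (convexHull_subset_affineSpan _ hx) (convexHull_subset_affineSpan _ hy)
  have hL0 : 0 ≤ L := by obtain ⟨i, k, -, rfl⟩ := hL.1; exact norm_nonneg _
  have ha0 : 0 ≤ a := by obtain ⟨i, rfl⟩ := ha.1; exact infDist_nonneg
  have htR : 0 < t * R := hL0.trans_lt hLtR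
  have ht0 : 0 ≤ t := ht ▸ div_nonneg ha0 (by positivity)
  obtain ⟨htpos, hR⟩ := (pos_and_pos_or_neg_and_neg_of_mul_pos htR).resolve_right
    fun h ↦ h.1.not_ge ht0
  obtain ⟨ha0', hjL⟩ := div_ne_zero_iff.1 (ht ▸ htpos.ne')
  have hcoeff : ∀ i, |e i| ≤ ‖y - x‖ / a := fun i ↦ by
    rw [le_div_iff₀ (ha0.lt_of_ne' ha0'), hyx]
    exact (mul_le_mul_of_nonneg_left (ha.2 ⟨i, rfl⟩) (abs_nonneg _)).trans
      (abs_mul_infDist_affineSpan_le v he i)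
  have hedge : ∀ i : Fin j, ‖Tᗮ.starProjection (v i.succ - v 0)‖ ≤ L ^ 2 / (2 * R) :=
    fun i ↦ by
      rw [T.norm_starProjection_orthogonal_eq_infDist]
      exact (hfed _ (hvM _)).trans (by gcongr; exact hL.2 ⟨i.succ, 0, i.succ_ne_zero, rfl⟩)
  have hnormal : ‖Tᗮ.starProjection (y - x)‖ ≤ L / (t * R) * ‖y - x‖ := by
    calc ‖Tᗮ.starProjection (y - x)‖ ≤ j * (‖y - x‖ / a * (L ^ 2 / (2 * R))) := by
          nth_rw 1 [hyx]; exact norm_map_sum_smul_le_of_sum_eq_zero _ v he hcoeff hedge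
      _ = L / (t * R) * ‖y - x‖ / 2 := by
          rw [ht]; field_simp [(mul_ne_zero_iff.1 hjL).1]
      _ ≤ L / (t * R) * ‖y - x‖ :=
          half_le_self (mul_nonneg (div_nonneg hL0 htR.le) (norm_nonneg _))
  rw [← T.starProjection_apply, ← T.starProjection_apply, ← map_sub]
  exact T.abs_norm_starProjection_sub_norm_le_s12 hnormal

/-- **Simplexwise distortion of orthogonal projection onto a tangent space.** Let `σ` be a
`j`-simplex with vertices on `M`, thickness `t`, longest edge length `L`, and vertex
`p = v 0`. If `T` is a linear subspace of dimension at least `j` satisfying Federer's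
tangent estimate at `p` with reach bound `R`, and `L < tR`, then the orthogonal projection
onto `T` restricted to `σ` is a `(L/(tR))²`-distortion map. -/
theorem orthogonal_projection_simplexwise_distortion {N j : ℕ} (hj : 1 ≤ j)
    (M : Set (EuclideanSpace ℝ (Fin N)))
    (v : Fin (j + 1) → EuclideanSpace ℝ (Fin N))
    (hv : AffineIndependent ℝ v) (hvM : ∀ i, v i ∈ M)
    (σ : Set (EuclideanSpace ℝ (Fin N)))
    (hσ : σ = convexHull ℝ (Set.range v))
    (L a t : ℝ)
    (hL : IsGreatest {d : ℝ | ∃ i k : Fin (j + 1), i ≠ k ∧ d = ‖v i - v k‖} L)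
    (ha : IsLeast {d : ℝ | ∃ i : Fin (j + 1),
      d = Metric.infDist (v i) (affineSpan ℝ (v '' {i}ᶜ) : Set (EuclideanSpace ℝ (Fin N)))} a)
    (ht : t = a / (j * L))
    (R : ℝ) (hR : 0 < R)
    (T : Submodule ℝ (EuclideanSpace ℝ (Fin N)))
    (hdim : j ≤ Module.finrank ℝ T)
    (hfed : ∀ z ∈ M, Metric.infDist (z - v 0) (T : Set (EuclideanSpace ℝ (Fin N))) ≤
      ‖z - v 0‖ ^ 2 / (2 * R))
    (hLtR : L < t * R) :
    ∀ x ∈ σ, ∀ y ∈ σ,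
      |‖(T.orthogonalProjectionOnto y : EuclideanSpace ℝ (Fin N)) -
          (T.orthogonalProjectionOnto x : EuclideanSpace ℝ (Fin N))‖ - ‖y - x‖| ≤
        (L / (t * R)) ^ 2 * ‖y - x‖ :=
  orthogonal_projection_simplexwise_distortion_general M v hvM σ hσ L a t hL ha ht R T hfed hLtR
end

section
/- Upper bound for the distortion of the closest-point projection: Let x, y, x̌, y̌ be points of EuclideanSpace ℝ (Fin N) and let 0 ≤ a < R. Suppose ‖x − x̌‖ ≤ a and ‖y − y̌‖ ≤ a, and suppose the inner-product bounds |⟪x − x̌, y̌ − x̌⟫| ≤ ‖x − x̌‖·‖y̌ − x̌‖²/(2R) and |⟪y − y̌, y̌ − x̌⟫| ≤ ‖y − y̌‖·‖y̌ − x̌‖²/(2R) hold. Then ‖y̌ − x̌‖ ≤ (1 − a/R)⁻¹·‖y − x‖. -/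
/-!
Write `u = y̌ - x̌`. Splitting `y - x = (y - y̌) + u - (x - x̌)` gives
`⟪y - x, u⟫ = ⟪y - y̌, u⟫ + ‖u‖² - ⟪x - x̌, u⟫`, and each normal term is at most
`a ‖u‖² / (2R)` in absolute value, so `⟪y - x, u⟫ ≥ (1 - a/R) ‖u‖²`. Cauchy–Schwarz bounds the
left side by `‖y - x‖ ‖u‖`; dividing by `‖u‖` gives `(1 - a/R) ‖u‖ ≤ ‖y - x‖`.
-/

open RealInnerProductSpace

section ChordDistortion

variable {E : Type*} [SeminormedAddCommGroup E] [InnerProductSpace ℝ E]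

theorem inner_sub_chord_eq (x y xc yc : E) :
    ⟪y - x, yc - xc⟫ = ⟪y - yc, yc - xc⟫ + ‖yc - xc‖ ^ 2 - ⟪x - xc, yc - xc⟫ := by
  rw [← real_inner_self_eq_norm_sq, ← inner_add_left, ← inner_sub_left]
  congr 1
  abel

theorem one_sub_mul_sq_le_inner_sub_chord {x y xc yc : E} {ε : ℝ}
    (hx : |⟪x - xc, yc - xc⟫| ≤ ε * ‖yc - xc‖ ^ 2)
    (hy : |⟪y - yc, yc - xc⟫| ≤ ε * ‖yc - xc‖ ^ 2) :
    (1 - 2 * ε) * ‖yc - xc‖ ^ 2 ≤ ⟪y - x, yc - xc⟫ := by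
  rw [inner_sub_chord_eq]
  linarith [neg_abs_le ⟪y - yc, yc - xc⟫, le_abs_self ⟪x - xc, yc - xc⟫]

theorem one_sub_mul_norm_chord_le {x y xc yc : E} {ε : ℝ}
    (hx : |⟪x - xc, yc - xc⟫| ≤ ε * ‖yc - xc‖ ^ 2)
    (hy : |⟪y - yc, yc - xc⟫| ≤ ε * ‖yc - xc‖ ^ 2) :
    (1 - 2 * ε) * ‖yc - xc‖ ≤ ‖y - x‖ := by
  rcases (norm_nonneg (yc - xc)).eq_or_lt with hzero | hpos
  · rw [← hzero, mul_zero]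
    exact norm_nonneg _
  refine le_of_mul_le_mul_right ?_ hpos
  calc (1 - 2 * ε) * ‖yc - xc‖ * ‖yc - xc‖ = (1 - 2 * ε) * ‖yc - xc‖ ^ 2 := by ring
    _ ≤ ⟪y - x, yc - xc⟫ := one_sub_mul_sq_le_inner_sub_chord hx hy
    _ ≤ ‖y - x‖ * ‖yc - xc‖ := real_inner_le_norm _ _

end ChordDistortion

theorem closest_point_projection_distortion_upper_bound_general {N : ℕ}
    (x y xc yc : EuclideanSpace ℝ (Fin N))
    (a R : ℝ) (haR : a < R)
    (hx : ‖x - xc‖ ≤ a) (hy : ‖y - yc‖ ≤ a)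
    (hix : |(inner ℝ (x - xc) (yc - xc) : ℝ)| ≤ ‖x - xc‖ * ‖yc - xc‖ ^ 2 / (2 * R))
    (hiy : |(inner ℝ (y - yc) (yc - xc) : ℝ)| ≤ ‖y - yc‖ * ‖yc - xc‖ ^ 2 / (2 * R)) :
    ‖yc - xc‖ ≤ (1 - a / R)⁻¹ * ‖y - x‖ := by
  have hR : 0 < R := ((norm_nonneg _).trans hx).trans_lt haR
  have normal_bound {p pc : EuclideanSpace ℝ (Fin N)} (hp : ‖p - pc‖ ≤ a) :
      ‖p - pc‖ * ‖yc - xc‖ ^ 2 / (2 * R) ≤ a / (2 * R) * ‖yc - xc‖ ^ 2 := by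
    rw [div_mul_eq_mul_div]
    gcongr
  have key := one_sub_mul_norm_chord_le (hix.trans (normal_bound hx))
    (hiy.trans (normal_bound hy))
  have hε : 1 - 2 * (a / (2 * R)) = 1 - a / R := by field_simp
  rw [hε] at key
  rwa [le_inv_mul_iff₀ (by rw [sub_pos, div_lt_one hR]; exact haR)]

/-- **Upper bound for the distortion of the closest-point projection.** If `x̌`, `y̌` are
the closest-point projections of `x`, `y` onto a set of local reach at least `R`, with
`‖x - x̌‖ ≤ a`, `‖y - y̌‖ ≤ a`, `a < R`, and the normal vectors satisfy Federer's
inner-product bounds against the chord `y̌ - x̌`, then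
`‖y̌ - x̌‖ ≤ (1 - a/R)⁻¹ ‖y - x‖`. -/
theorem closest_point_projection_distortion_upper_bound {N : ℕ}
    (x y xc yc : EuclideanSpace ℝ (Fin N))
    (a R : ℝ) (ha0 : 0 ≤ a) (haR : a < R)
    (hx : ‖x - xc‖ ≤ a) (hy : ‖y - yc‖ ≤ a)
    (hix : |(inner ℝ (x - xc) (yc - xc) : ℝ)| ≤ ‖x - xc‖ * ‖yc - xc‖ ^ 2 / (2 * R))
    (hiy : |(inner ℝ (y - yc) (yc - xc) : ℝ)| ≤ ‖y - yc‖ * ‖yc - xc‖ ^ 2 / (2 * R)) :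
    ‖yc - xc‖ ≤ (1 - a / R)⁻¹ * ‖y - x‖ :=
  closest_point_projection_distortion_upper_bound_general x y xc yc a R haR hx hy hix hiy
end

section
/- Chord-length lower bound for a curvature-bounded curve: Let γ : ℝ → EuclideanSpace ℝ (Fin N), let a ≤ b with b − a ≤ πR for some R > 0, and suppose γ is twice differentiable on [a, b] with ‖γ′(s)‖ = 1 and ‖γ″(s)‖ ≤ 1/R for all s ∈ [a, b] (γ is parameterized by arc length with curvature at most 1/R). Then ‖γ(b) − γ(a)‖ ≥ 2R·sin((b − a)/(2R)). -/
/-!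
The unit tangent `γ'` moves on the unit sphere with speed at most `1/R`. The angle between
unit vectors is a metric, and a chord of length `ℓ` subtends the angle `2 arcsin (ℓ / 2) ≈ ℓ`;
subdividing `[s, t]` finely therefore bounds the angle between `γ' s` and `γ' t` by `|t - s| / R`.
With `m` the midpoint of `[a, b]` this angle is at most `π / 2`, so
`⟪γ' m, γ' s⟫ ≥ cos ((s - m) / R)`. Integrating over `[a, b]` gives
`⟪γ' m, γ b - γ a⟫ ≥ 2 R sin ((b - a) / (2 R))`, and Cauchy–Schwarz concludes.
-/

open Real Filter Set Topology InnerProductGeometry RealInnerProductSpace intervalIntegral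

theorem angle_eq_two_mul_arcsin_norm_sub {E : Type*} [NormedAddCommGroup E]
    [InnerProductSpace ℝ E] {u v : E} (hu : ‖u‖ = 1) (hv : ‖v‖ = 1) :
    angle u v = 2 * arcsin (‖u - v‖ / 2) := by
  have h₀ := angle_nonneg u v
  have hπ := angle_le_pi u v
  have hsin : ‖u - v‖ / 2 = sin (angle u v / 2) := by
    refine (sq_eq_sq₀ (by positivity) (sin_nonneg_of_nonneg_of_le_pi (by linarith)
      (by linarith))).mp ?_
    rw [div_pow, pow_two ‖u - v‖,
      norm_sub_sq_eq_norm_sq_add_norm_sq_sub_two_mul_norm_mul_norm_mul_cos_angle,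
      sin_sq_eq_half_sub, hu, hv, mul_div_cancel₀ _ two_ne_zero]
    ring
  rw [hsin, arcsin_sin] <;> linarith

section Subdivision

variable {D : ℝ → ℝ → ℝ} {φ : ℝ → ℝ} {s t : ℝ}

theorem le_natCast_mul_of_le_add
    (htri : ∀ x ∈ Icc s t, ∀ y ∈ Icc x t, ∀ z ∈ Icc y t, D x z ≤ D x y + D y z)
    (hφ : ∀ x ∈ Icc s t, ∀ y ∈ Ioc x t, D x y ≤ φ (y - x)) {n : ℕ} (hn : 1 ≤ n) :
    ∀ y ∈ Ioc s t, D s y ≤ n * φ ((y - s) / n) := by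
  induction n, hn using Nat.le_induction with
  | base => intro y hy; simpa using hφ s ⟨le_rfl, hy.1.le.trans hy.2⟩ y hy
  | succ n hn ih =>
    intro y hy
    have hs : s ∈ Icc s t := ⟨le_rfl, hy.1.le.trans hy.2⟩
    set h := (y - s) / (n + 1 : ℕ) with hh
    have hpos : 0 < h := div_pos (by linarith [hy.1]) (by positivity)
    have hsplit : y - h - s = n * h := by rw [hh]; field_simp; push_cast; ring
    have hxs : s < y - h := by
      have hn' : (1 : ℝ) ≤ n := by exact_mod_cast hn
      nlinarith
    calc D s y ≤ D s (y - h) + D (y - h) y :=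
          htri s hs (y - h) ⟨hxs.le, by linarith [hy.2]⟩ y ⟨by linarith, hy.2⟩
      _ ≤ n * φ h + φ h := by
          gcongr
          · simpa [hsplit, show (n : ℝ) ≠ 0 by positivity] using
              ih (y - h) ⟨hxs, by linarith [hy.2]⟩
          · simpa using hφ (y - h) ⟨hxs.le, by linarith [hy.2]⟩ y ⟨by linarith, hy.2⟩
      _ = (n + 1 : ℕ) * φ h := by push_cast; ring

theorem le_mul_sub_of_le_add_of_hasDerivWithinAt {L : ℝ} (hst : s < t)
    (htri : ∀ x ∈ Icc s t, ∀ y ∈ Icc x t, ∀ z ∈ Icc y t, D x z ≤ D x y + D y z)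
    (hφ : ∀ x ∈ Icc s t, ∀ y ∈ Ioc x t, D x y ≤ φ (y - x))
    (hφ₀ : φ 0 = 0) (hφ' : HasDerivWithinAt φ L (Ioi 0) 0) :
    D s t ≤ L * (t - s) := by
  have hslope : Tendsto (fun h => φ h / h) (𝓝[>] 0) (𝓝 L) := by
    have hslope_eq : slope φ 0 = fun h => φ h / h := by ext h; simp [slope_def_field, hφ₀]
    simpa [hslope_eq] using hasDerivWithinAt_iff_tendsto_slope.mp hφ'
  have hsteps : Tendsto (fun n : ℕ => (t - s) / n) atTop (𝓝[>] 0) :=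
    tendsto_nhdsWithin_iff.mpr ⟨tendsto_const_div_atTop_nhds_zero_nat _,
      eventually_atTop.mpr ⟨1, fun n hn => div_pos (sub_pos.mpr hst) (by simp; omega)⟩⟩
  rw [mul_comm]
  refine ge_of_tendsto ((hslope.comp hsteps).const_mul (t - s))
    (eventually_atTop.mpr ⟨1, fun n hn => ?_⟩)
  have hn' : (n : ℝ) ≠ 0 := by positivity
  calc D s t ≤ n * φ ((t - s) / n) := le_natCast_mul_of_le_add htri hφ hn t ⟨hst, le_rfl⟩
    _ = (t - s) * (φ ((t - s) / n) / ((t - s) / n)) := by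
      field_simp [sub_ne_zero.mpr hst.ne']

end Subdivision

section UnitCurve

variable {E : Type*} [NormedAddCommGroup E] [InnerProductSpace ℝ E] {T : ℝ → E} {I : Set ℝ}
  {K x y : ℝ}

theorem angle_le_mul_abs_sub_of_norm_sub_le (hI : I.OrdConnected) (hunit : ∀ s ∈ I, ‖T s‖ = 1)
    (hT : ∀ s ∈ I, ∀ t ∈ I, ‖T t - T s‖ ≤ K * |t - s|) (hx : x ∈ I) (hy : y ∈ I) :
    angle (T x) (T y) ≤ K * |y - x| := by
  wlog hxy : x ≤ y generalizing x y
  · rw [angle_comm, abs_sub_comm]; exact this hy hx (le_of_not_ge hxy)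
  rcases hxy.eq_or_lt with rfl | hxy
  · have hx0 : T x ≠ 0 := norm_ne_zero_iff.mp (by rw [hunit x hx]; exact one_ne_zero)
    simp [angle_self hx0]
  have hsub : Icc x y ⊆ I := hI.out hx hy
  have hφ' : HasDerivAt (fun h => 2 * arcsin (K * h / 2)) K 0 := by
    have := (hasDerivAt_arcsin (x := K * id 0 / 2) (by simp) (by simp)).comp 0
      (((hasDerivAt_id (0 : ℝ)).const_mul K).div_const 2)
    exact (this.const_mul 2).congr_deriv (by simp [mul_div_cancel₀])
  rw [abs_of_pos (sub_pos.mpr hxy)]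
  refine le_mul_sub_of_le_add_of_hasDerivWithinAt (D := fun u v => angle (T u) (T v)) hxy
    (fun u _ v _ w _ => angle_le_angle_add_angle _ _ _) (fun u hu v hv => ?_) (by simp)
    hφ'.hasDerivWithinAt
  have hu' : u ∈ I := hsub hu
  have hv' : v ∈ I := hsub ⟨hu.1.trans hv.1.le, hv.2⟩
  rw [angle_eq_two_mul_arcsin_norm_sub (hunit u hu') (hunit v hv'), norm_sub_rev]
  gcongr
  simpa [abs_of_pos (sub_pos.mpr hv.1)] using hT u hu' v hv'

theorem cos_mul_sub_le_inner_of_norm_sub_le (hI : I.OrdConnected) (hunit : ∀ s ∈ I, ‖T s‖ = 1)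
    (hT : ∀ s ∈ I, ∀ t ∈ I, ‖T t - T s‖ ≤ K * |t - s|) (hx : x ∈ I) (hy : y ∈ I)
    (hπ : K * |y - x| ≤ π) :
    cos (K * (y - x)) ≤ ⟪T x, T y⟫ := by
  have hcos : cos (K * (y - x)) = cos (K * |y - x|) := by
    rcases abs_choice (y - x) with h | h <;> rw [h]; rw [mul_neg, cos_neg]
  have hangle : cos (angle (T x) (T y)) = ⟪T x, T y⟫ := by
    simpa [hunit x hx, hunit y hy] using cos_angle_mul_norm_mul_norm (T x) (T y)
  rw [hcos, ← hangle]
  exact cos_le_cos_of_nonneg_of_le_pi (angle_nonneg _ _) hπ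
    (angle_le_mul_abs_sub_of_norm_sub_le hI hunit hT hx hy)

end UnitCurve

theorem inner_sub_eq_integral_inner {E : Type*} [NormedAddCommGroup E] [InnerProductSpace ℝ E]
    {f f' : ℝ → E} {a b : ℝ} (u : E) (hab : a ≤ b)
    (hf : ∀ s ∈ Icc a b, HasDerivWithinAt f (f' s) (Icc a b) s) (hf' : ContinuousOn f' (Icc a b)) :
    ⟪u, f b - f a⟫ = ∫ s in a..b, ⟪u, f' s⟫ := by
  have hderiv : ∀ s ∈ Icc a b, HasDerivWithinAt (fun s => ⟪u, f s⟫) ⟪u, f' s⟫ (Icc a b) s :=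
    fun s hs => (innerSL ℝ u).hasFDerivAt.comp_hasDerivWithinAt s (hf s hs)
  rw [inner_sub_right, integral_eq_sub_of_hasDerivAt_of_le hab
    (fun s hs => (hderiv s hs).continuousWithinAt)
    (fun s hs => (hderiv s (Ioo_subset_Icc_self hs)).hasDerivAt (Icc_mem_nhds hs.1 hs.2))
    ((innerSL ℝ u).continuous.comp_continuousOn hf' |>.intervalIntegrable_of_Icc hab)]

theorem integral_cos_sub_midpoint_div (a b : ℝ) {R : ℝ} (hR : R ≠ 0) :
    ∫ s in a..b, cos ((s - (a + b) / 2) / R) = 2 * R * sin ((b - a) / (2 * R)) := by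
  have h := integral_comp_div_sub (f := cos) (a := a) (b := b) hR ((a + b) / 2 / R)
  simp only [integral_cos, smul_eq_mul] at h
  rw [show (fun s => cos ((s - (a + b) / 2) / R)) = fun s => cos (s / R - (a + b) / 2 / R) by
    ext s; ring_nf, h]
  rw [show b / R - (a + b) / 2 / R = (b - a) / (2 * R) by field_simp; ring,
    show a / R - (a + b) / 2 / R = -((b - a) / (2 * R)) by field_simp; ring, sin_neg]
  ring

/-- **Chord-length lower bound for a curvature-bounded curve.** If `γ` is parameterized by
arc length on `[a, b]` with curvature at most `1/R` and `b - a ≤ πR`, then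
`‖γ b - γ a‖ ≥ 2R · sin((b - a)/(2R))`. -/
theorem chord_length_lower_bound {N : ℕ}
    (γ γ' γ'' : ℝ → EuclideanSpace ℝ (Fin N))
    (a b R : ℝ) (hab : a ≤ b) (hR : 0 < R) (hlen : b - a ≤ Real.pi * R)
    (hd1 : ∀ s ∈ Set.Icc a b, HasDerivWithinAt γ (γ' s) (Set.Icc a b) s)
    (hd2 : ∀ s ∈ Set.Icc a b, HasDerivWithinAt γ' (γ'' s) (Set.Icc a b) s)
    (hunit : ∀ s ∈ Set.Icc a b, ‖γ' s‖ = 1)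
    (hcurv : ∀ s ∈ Set.Icc a b, ‖γ'' s‖ ≤ 1 / R) :
    2 * R * Real.sin ((b - a) / (2 * R)) ≤ ‖γ b - γ a‖ := by
  set m := (a + b) / 2 with hm_def
  have hm : m ∈ Icc a b := ⟨by linarith, by linarith⟩
  have hγ'_cont : ContinuousOn γ' (Icc a b) := fun s hs => (hd2 s hs).continuousWithinAt
  have hLip : ∀ s ∈ Icc a b, ∀ t ∈ Icc a b, ‖γ' t - γ' s‖ ≤ R⁻¹ * |t - s| := fun s hs t ht => by
    simpa using (convex_Icc a b).norm_image_sub_le_of_norm_hasDerivWithin_le hd2 hcurv hs ht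
  have hcos : ∀ s ∈ Icc a b, cos ((s - m) / R) ≤ ⟪γ' m, γ' s⟫ := fun s hs => by
    rw [div_eq_inv_mul]
    refine cos_mul_sub_le_inner_of_norm_sub_le ordConnected_Icc hunit hLip hm hs ?_
    rw [inv_mul_le_iff₀ hR, abs_le]
    constructor <;> nlinarith [hs.1, hs.2, pi_pos]
  calc 2 * R * sin ((b - a) / (2 * R)) = ∫ s in a..b, cos ((s - m) / R) :=
        (integral_cos_sub_midpoint_div a b hR.ne').symm
    _ ≤ ∫ s in a..b, ⟪γ' m, γ' s⟫ := by
        refine integral_mono_on hab ((by fun_prop : Continuous fun s =>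
          cos ((s - m) / R)).intervalIntegrable a b) ?_ hcos
        exact ((innerSL ℝ (γ' m)).continuous.comp_continuousOn hγ'_cont).intervalIntegrable_of_Icc
          hab
    _ = ⟪γ' m, γ b - γ a⟫ := (inner_sub_eq_integral_inner _ hab hd1 hγ'_cont).symm
    _ ≤ ‖γ b - γ a‖ := by simpa [hunit m hm] using real_inner_le_norm (γ' m) (γ b - γ a)
end

section
/- Empty tangent ball: Let M ⊆ E := EuclideanSpace ℝ (Fin N), let y ∈ M, let u ∈ E with ‖u‖ = 1, and let r > 0. Suppose that for every s with 0 < s < r and every z ∈ M, ‖(y + s•u) − z‖ ≥ s (i.e. y is a nearest point of M to y + s•u). Then the open ball of radius r centred at y + r•u contains no point of M: M ∩ Metric.ball (y + r•u) r = ∅. -/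
/-! Moving the centre of a ball of radius `r` along the unit vector `u` towards `y` by `r - s`
moves it by exactly `r - s`. So if some `z ∈ M` were at distance `d < r` from `y + r•u`, then
for `s` strictly between `(d + r)/2` and `r` it would be at distance at most `d + (r - s) < s`
from `y + s•u`, contradicting that `y` is a nearest point of `M` to `y + s•u`. -/

open Metric

lemma dist_add_smul_le_of_le {E : Type*} [SeminormedAddCommGroup E] [NormedSpace ℝ E]
    {u : E} (hu : ‖u‖ = 1) {s r : ℝ} (hsr : s ≤ r) (y z : E) :
    dist z (y + s • u) ≤ dist z (y + r • u) + (r - s) := by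
  have hshift : dist (y + r • u) (y + s • u) = r - s := by
    rw [dist_add_left, dist_eq_norm, ← sub_smul, norm_smul, hu, mul_one, Real.norm_eq_abs,
      abs_of_nonneg (sub_nonneg.mpr hsr)]
  calc dist z (y + s • u) ≤ dist z (y + r • u) + dist (y + r • u) (y + s • u) :=
        dist_triangle _ _ _
    _ = dist z (y + r • u) + (r - s) := by rw [hshift]

theorem empty_tangent_ball_general {N : ℕ}
    (M : Set (EuclideanSpace ℝ (Fin N)))
    (y : EuclideanSpace ℝ (Fin N))
    (u : EuclideanSpace ℝ (Fin N)) (hu : ‖u‖ = 1)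
    (r : ℝ)
    (hnear : ∀ s : ℝ, 0 < s → s < r → ∀ z ∈ M, s ≤ ‖(y + s • u) - z‖) :
    M ∩ Metric.ball (y + r • u) r = ∅ := by
  refine Set.eq_empty_of_forall_notMem fun z ⟨hzM, hzB⟩ => ?_
  rw [mem_ball] at hzB
  set d := dist z (y + r • u)
  obtain ⟨s, hds, hsr⟩ := exists_between (show (d + r) / 2 < r by linarith)
  have hs_pos : 0 < s := by linarith [dist_nonneg (x := z) (y := y + r • u)]
  have hfar : s ≤ dist z (y + s • u) := by
    rw [dist_comm, dist_eq_norm]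
    exact hnear s hs_pos hsr z hzM
  linarith [dist_add_smul_le_of_le hu hsr.le y z]

/-- **Empty tangent ball.** If for every `0 < s < r` the point `y` is a nearest point of
`M` to `y + s•u` (with `u` a unit vector), then the open ball of radius `r` centred at
`y + r•u`, tangent to `M` at `y`, contains no point of `M`. -/
theorem empty_tangent_ball {N : ℕ}
    (M : Set (EuclideanSpace ℝ (Fin N)))
    (y : EuclideanSpace ℝ (Fin N)) (hy : y ∈ M)
    (u : EuclideanSpace ℝ (Fin N)) (hu : ‖u‖ = 1)
    (r : ℝ) (hr : 0 < r)
    (hnear : ∀ s : ℝ, 0 < s → s < r → ∀ z ∈ M, s ≤ ‖(y + s • u) - z‖) :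
    M ∩ Metric.ball (y + r • u) r = ∅ :=
  empty_tangent_ball_general M y u hu r hnear
end
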